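/- arXiv:1510.04342 — 7 statements merged into one kernel-verified Lean document; each statement's English description precedes it below -/
import Mathlib

section
/- Let X, W, Y⁰, Y¹ be random variables on a common probability space, with W taking values in {0,1} and Y⁰, Y¹ integrable. Assume unconfoundedness: the pair (Y⁰, Y¹) is conditionally independent of W given the σ-algebra σ(X). Let e = E[W | σ(X)] be the treatment propensity and assume ε ≤ e ≤ 1 − ε almost surely for some ε > 0. Define the observed outcome Y = W·Y¹ + (1 − W)·Y⁰. Then, almost surely, E[ Y·( W/e − (1 − W)/(1 − e) ) | σ(X) ] = E[ Y¹ − Y⁰ | σ(X) ]. -/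
/-!
Since `W ∈ {0, 1}`, the weighted observed outcome is `W Y¹ / e - (1 - W) Y⁰ / (1 - e)`.
Given `σ(X)`, unconfoundedness makes `Y¹` independent of `W` and `Y⁰` independent of `1 - W`, so
`E[W Y¹ | X] = e · E[Y¹ | X]` and `E[(1 - W) Y⁰ | X] = (1 - e) · E[Y⁰ | X]`. The weights `1/e` and
`1/(1 - e)` are `σ(X)`-measurable and, by overlap, bounded, so they pull out of the conditional
expectation and cancel these factors.
-/

open MeasureTheory ProbabilityTheory

section

variable {Ω : Type*} {m mΩ : MeasurableSpace Ω} {μ : Measure Ω}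

theorem ProbabilityTheory.CondIndepFun.condExp_mul_ae_eq [StandardBorelSpace Ω] [IsFiniteMeasure μ]
    {hm : m ≤ mΩ} {f g : Ω → ℝ} (hfg : CondIndepFun m hm f g μ)
    (hf : Measurable f) (hg : Measurable g)
    (hfi : Integrable f μ) (hgi : Integrable g μ) (hfgi : Integrable (f * g) μ) :
    μ[f * g | m] =ᵐ[μ] μ[f | m] * μ[g | m] := by
  set κ := condExpKernel μ m
  -- As `ℝ × ℝ` is countably generated, conditional independence says that almost every
  -- conditional law of `(f, g)` is the product of the conditional laws of `f` and `g`.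
  have hprod : ∀ᵐ ω ∂μ, (κ ω).map (fun x ↦ (f x, g x)) = ((κ ω).map f).prod ((κ ω).map g) := by
    filter_upwards [ae_of_ae_trim hm ((condIndepFun_iff_map_prod_eq_prod_map_map hf hg).1 hfg)]
      with ω hω
    rwa [Kernel.prod_apply, Kernel.map_apply _ (hf.prodMk hg), Kernel.map_apply _ hf,
      Kernel.map_apply _ hg] at hω
  filter_upwards [condExp_ae_eq_integral_condExpKernel hm hfgi,
    condExp_ae_eq_integral_condExpKernel hm hfi, condExp_ae_eq_integral_condExpKernel hm hgi,
    hprod] with ω hfgω hfω hgω hω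
  calc μ[f * g | m] ω = ∫ p, p.1 * p.2 ∂(κ ω).map (fun x ↦ (f x, g x)) := by
        rw [hfgω, integral_map (hf.prodMk hg).aemeasurable (by fun_prop)]; rfl
    _ = (∫ x, x ∂(κ ω).map f) * ∫ y, y ∂(κ ω).map g := by
        rw [hω, integral_prod_mul (fun x : ℝ ↦ x) (fun y : ℝ ↦ y)]
    _ = (μ[f | m] * μ[g | m]) ω := by
        rw [integral_map hf.aemeasurable (f := fun x : ℝ ↦ x) (by fun_prop),
          integral_map hg.aemeasurable (f := fun y : ℝ ↦ y) (by fun_prop), Pi.mul_apply, hfω, hgω]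

theorem integrable_mul_div_of_bound {T Y p : Ω → ℝ} {C ε : ℝ} (hε : 0 < ε)
    (hT : AEStronglyMeasurable T μ) (hTC : ∀ᵐ ω ∂μ, ‖T ω‖ ≤ C) (hYi : Integrable Y μ)
    (hp : AEStronglyMeasurable p μ) (hpε : ∀ᵐ ω ∂μ, ε ≤ p ω) :
    Integrable (fun ω ↦ T ω * Y ω / p ω) μ := by
  have hbound : ∀ᵐ ω ∂μ, ‖T ω / p ω‖ ≤ C / ε := by
    filter_upwards [hTC, hpε] with ω hTω hpω
    rw [norm_div, Real.norm_of_nonneg (hε.le.trans hpω)]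
    exact div_le_div₀ ((norm_nonneg _).trans hTω) hTω hε hpω
  simpa only [Pi.div_apply, mul_div_right_comm] using
    hYi.bdd_mul (hT.aemeasurable.div hp.aemeasurable).aestronglyMeasurable hbound

theorem condExp_const_sub [IsFiniteMeasure μ] (hm : m ≤ mΩ) {f : Ω → ℝ} (hf : Integrable f μ)
    (c : ℝ) : μ[fun ω ↦ c - f ω | m] =ᵐ[μ] fun ω ↦ c - μ[f | m] ω := by
  filter_upwards [condExp_sub (integrable_const c) hf m] with ω hω
  rw [show (fun ω ↦ c - f ω) = (fun _ ↦ c) - f from rfl, hω, Pi.sub_apply, condExp_const hm]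

theorem condExp_mul_div_ae_eq_of_condIndepFun [StandardBorelSpace Ω] [IsFiniteMeasure μ]
    {hm : m ≤ mΩ} {T Y p : Ω → ℝ} {C ε : ℝ} (hTY : CondIndepFun m hm T Y μ)
    (hT : Measurable T) (hY : Measurable Y) (hTC : ∀ᵐ ω ∂μ, ‖T ω‖ ≤ C) (hYi : Integrable Y μ)
    (hp : StronglyMeasurable[m] p) (hpT : p =ᵐ[μ] μ[T | m]) (hε : 0 < ε)
    (hpε : ∀ᵐ ω ∂μ, ε ≤ p ω) :
    μ[fun ω ↦ T ω * Y ω / p ω | m] =ᵐ[μ] μ[Y | m] := by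
  have hTYi : Integrable (T * Y) μ := hYi.bdd_mul hT.aestronglyMeasurable hTC
  have hTi : Integrable T μ := .of_bound hT.aestronglyMeasurable C hTC
  have hp_inv : StronglyMeasurable[m] fun ω ↦ (p ω)⁻¹ := hp.measurable.inv.stronglyMeasurable
  have hp_inv_bound : ∀ᵐ ω ∂μ, ‖(p ω)⁻¹‖ ≤ ε⁻¹ := by
    filter_upwards [hpε] with ω hpω
    rw [norm_inv, Real.norm_of_nonneg (hε.le.trans hpω)]
    exact inv_anti₀ hε hpω
  have hsplit : (fun ω ↦ T ω * Y ω / p ω) = (fun ω ↦ (p ω)⁻¹) * (T * Y) := by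
    funext ω
    simp only [Pi.mul_apply, div_eq_inv_mul]
  rw [hsplit]
  filter_upwards [condExp_stronglyMeasurable_mul_of_bound hm hp_inv hTYi ε⁻¹ hp_inv_bound,
    hTY.condExp_mul_ae_eq hT hY hTi hYi hTYi, hpT, hpε] with ω hpull hfactor hpω hεω
  rw [hpull, Pi.mul_apply, hfactor, Pi.mul_apply, ← hpω,
    inv_mul_cancel_left₀ (hε.trans_le hεω).ne']

theorem observed_mul_ipw_weight {w y₀ y₁ e : ℝ} (hw : w = 0 ∨ w = 1) :
    (w * y₁ + (1 - w) * y₀) * (w / e - (1 - w) / (1 - e))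
      = w * y₁ / e - (1 - w) * y₀ / (1 - e) := by
  rcases hw with rfl | rfl <;> ring

end

theorem propensity_weighting_identifies_cate_general
    {Ω : Type*} [MeasurableSpace Ω] [StandardBorelSpace Ω]
    {E : Type*} [MeasurableSpace E]
    (μ : Measure Ω) [IsProbabilityMeasure μ]
    (X : Ω → E) (W Y0 Y1 : Ω → ℝ)
    (hW : Measurable W)
    (hY0 : Measurable Y0) (hY1 : Measurable Y1)
    (hW01 : ∀ ω, W ω = 0 ∨ W ω = 1)
    (hY0int : Integrable Y0 μ) (hY1int : Integrable Y1 μ)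
    (hmX : MeasurableSpace.comap X inferInstance ≤ (inferInstance : MeasurableSpace Ω))
    (hunconf : CondIndepFun (MeasurableSpace.comap X inferInstance) hmX
      (fun ω => (Y0 ω, Y1 ω)) W μ)
    (e : Ω → ℝ) (he : e = μ[W | MeasurableSpace.comap X inferInstance])
    (ε : ℝ) (hε : 0 < ε)
    (hoverlap : ∀ᵐ ω ∂μ, ε ≤ e ω ∧ e ω ≤ 1 - ε)
    (Y : Ω → ℝ) (hY : Y = fun ω => W ω * Y1 ω + (1 - W ω) * Y0 ω) :
    μ[(fun ω => Y ω * (W ω / e ω - (1 - W ω) / (1 - e ω))) |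
        MeasurableSpace.comap X inferInstance]
      =ᵐ[μ] μ[(fun ω => Y1 ω - Y0 ω) | MeasurableSpace.comap X inferInstance] := by
  have hW_le : ∀ᵐ ω ∂μ, ‖W ω‖ ≤ 1 := .of_forall fun ω ↦ by rcases hW01 ω with h | h <;> simp [h]
  have hW'_le : ∀ᵐ ω ∂μ, ‖1 - W ω‖ ≤ 1 :=
    .of_forall fun ω ↦ by rcases hW01 ω with h | h <;> simp [h]
  have hW' : Measurable fun ω ↦ 1 - W ω := measurable_const.sub hW
  have he_meas : StronglyMeasurable[MeasurableSpace.comap X inferInstance] e :=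
    he ▸ stronglyMeasurable_condExp
  have he_ae : AEStronglyMeasurable e μ := (he_meas.mono hmX).aestronglyMeasurable
  have he_ge : ∀ᵐ ω ∂μ, ε ≤ e ω := hoverlap.mono fun _ h ↦ h.1
  have he'_ge : ∀ᵐ ω ∂μ, ε ≤ 1 - e ω := hoverlap.mono fun _ h ↦ by linarith [h.2]
  have he' : (fun ω ↦ 1 - e ω) =ᵐ[μ] μ[fun ω ↦ 1 - W ω | MeasurableSpace.comap X inferInstance] :=
    he ▸ (condExp_const_sub hmX (.of_bound hW.aestronglyMeasurable 1 hW_le) 1).symm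
  have htreated : μ[fun ω ↦ W ω * Y1 ω / e ω | MeasurableSpace.comap X inferInstance]
      =ᵐ[μ] μ[Y1 | MeasurableSpace.comap X inferInstance] :=
    condExp_mul_div_ae_eq_of_condIndepFun (hunconf.comp measurable_snd measurable_id).symm
      hW hY1 hW_le hY1int he_meas (he ▸ .rfl) hε he_ge
  have hcontrol : μ[fun ω ↦ (1 - W ω) * Y0 ω / (1 - e ω) | MeasurableSpace.comap X inferInstance]
      =ᵐ[μ] μ[Y0 | MeasurableSpace.comap X inferInstance] :=
    condExp_mul_div_ae_eq_of_condIndepFun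
      (hunconf.comp measurable_fst (measurable_const.sub measurable_id)).symm hW' hY0 hW'_le
      hY0int (stronglyMeasurable_const.sub he_meas) he' hε he'_ge
  have htreated_int : Integrable (fun ω ↦ W ω * Y1 ω / e ω) μ :=
    integrable_mul_div_of_bound hε hW.aestronglyMeasurable hW_le hY1int he_ae he_ge
  have hcontrol_int : Integrable (fun ω ↦ (1 - W ω) * Y0 ω / (1 - e ω)) μ :=
    integrable_mul_div_of_bound hε hW'.aestronglyMeasurable hW'_le hY0int
      (aestronglyMeasurable_const.sub he_ae) he'_ge
  have hsplit : (fun ω ↦ Y ω * (W ω / e ω - (1 - W ω) / (1 - e ω)))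
      = (fun ω ↦ W ω * Y1 ω / e ω) - fun ω ↦ (1 - W ω) * Y0 ω / (1 - e ω) :=
    funext fun ω ↦ hY ▸ observed_mul_ipw_weight (hW01 ω)
  rw [hsplit]
  filter_upwards [condExp_sub htreated_int hcontrol_int _, htreated, hcontrol,
    condExp_sub hY1int hY0int _] with ω hsub h1 h0 hcate
  rw [hsub, Pi.sub_apply, h1, h0]
  exact hcate.symm

/-- Under unconfoundedness and overlap, the propensity-weighted
observed outcome identifies the conditional average treatment effect:
`E[ Y·( W/e − (1 − W)/(1 − e) ) | σ(X) ] = E[ Y¹ − Y⁰ | σ(X) ]` almost surely. -/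
theorem propensity_weighting_identifies_cate
    {Ω : Type*} [MeasurableSpace Ω] [StandardBorelSpace Ω] [Nonempty Ω]
    {E : Type*} [MeasurableSpace E]
    (μ : Measure Ω) [IsProbabilityMeasure μ]
    (X : Ω → E) (W Y0 Y1 : Ω → ℝ)
    (hX : Measurable X) (hW : Measurable W)
    (hY0 : Measurable Y0) (hY1 : Measurable Y1)
    (hW01 : ∀ ω, W ω = 0 ∨ W ω = 1)
    (hY0int : Integrable Y0 μ) (hY1int : Integrable Y1 μ)
    (hmX : MeasurableSpace.comap X inferInstance ≤ (inferInstance : MeasurableSpace Ω))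
    (hunconf : CondIndepFun (MeasurableSpace.comap X inferInstance) hmX
      (fun ω => (Y0 ω, Y1 ω)) W μ)
    (e : Ω → ℝ) (he : e = μ[W | MeasurableSpace.comap X inferInstance])
    (ε : ℝ) (hε : 0 < ε)
    (hoverlap : ∀ᵐ ω ∂μ, ε ≤ e ω ∧ e ω ≤ 1 - ε)
    (Y : Ω → ℝ) (hY : Y = fun ω => W ω * Y1 ω + (1 - W ω) * Y0 ω) :
    μ[(fun ω => Y ω * (W ω / e ω - (1 - W ω) / (1 - e ω))) |
        MeasurableSpace.comap X inferInstance]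
      =ᵐ[μ] μ[(fun ω => Y1 ω - Y0 ω) | MeasurableSpace.comap X inferInstance] :=
  propensity_weighting_identifies_cate_general μ X W Y0 Y1 hW hY0 hY1 hW01 hY0int hY1int hmX hunconf
    e he ε hε hoverlap Y hY
end

section
/- Fix integers 1 ≤ s < n and real numbers y_1, ..., y_n, and let ȳ = (1/n) Σ_{i=1}^n y_i. Let A be a uniformly random size-s subset of {1, ..., n} (uniform over all C(n,s) such subsets), let μ*(A) = (1/s) Σ_{i ∈ A} y_i and N_i(A) = 1{i ∈ A}. Then the infinitesimal jackknife estimate with finite-sample correction satisfies exactly: ((n−1)/n)·(n/(n−s))² · Σ_{i=1}^n Cov(μ*(A), N_i(A))² = (1/(n(n−1))) Σ_{i=1}^n (y_i − ȳ)², where the covariances are with respect to the random subset A. -/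
/-!
Write `S = ∑ y` and `C = (n choose s)`. Summing over subsets, `∑_A ∑_{j ∈ A} y j` counts each `y j`
once for every `s`-subset containing `j`, i.e. `(n-1 choose s-1) = (s/n) C` times, so
`E[μ*] = S/n` and `E[N_i] = s/n`. The subsets avoiding `i` are the `s`-subsets of the other
`n - 1` points, so the same count gives
`E[μ* N_i] = (1/n) (S - (n-s)/(n-1) (S - y i))`, whence
`Cov(μ*, N_i) = (n-s)/(n(n-1)) (y i - ȳ)`. Squaring and summing, the correction factor
`((n-1)/n) (n/(n-s))²` turns `((n-s)/(n(n-1)))²` into `1/(n(n-1))`.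
-/

open Finset

namespace Finset

variable {α : Type*} [DecidableEq α]

theorem card_filter_mem_powersetCard {t : Finset α} {a : α} (ha : a ∈ t) {k : ℕ} (hk : k ≠ 0) :
    #{A ∈ powersetCard k t | a ∈ A} = (#t - 1).choose (k - 1) := by
  simpa using card_filter_powersetCard_subset {a} t k (singleton_subset_iff.2 ha)
    (by simpa [Nat.one_le_iff_ne_zero])

theorem sum_powersetCard_sum {M : Type*} [AddCommMonoid M] (t : Finset α) {k : ℕ} (hk : k ≠ 0)
    (f : α → M) :
    ∑ A ∈ powersetCard k t, ∑ j ∈ A, f j = (#t - 1).choose (k - 1) • ∑ j ∈ t, f j := by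
  calc ∑ A ∈ powersetCard k t, ∑ j ∈ A, f j
      = ∑ j ∈ t, ∑ A ∈ powersetCard k t with j ∈ A, f j :=
        sum_comm' fun A j => by simp only [mem_filter, mem_powersetCard]; grind
    _ = ∑ j ∈ t, (#t - 1).choose (k - 1) • f j :=
        sum_congr rfl fun j hj => by rw [sum_const, card_filter_mem_powersetCard hj hk]
    _ = (#t - 1).choose (k - 1) • ∑ j ∈ t, f j := (smul_sum ..).symm

theorem filter_notMem_powersetCard (t : Finset α) (k : ℕ) (a : α) :
    {A ∈ powersetCard k t | a ∉ A} = powersetCard k (t.erase a) := by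
  ext A
  simp [subset_erase, and_right_comm]

theorem sum_powersetCard_sum_mul_ite_mem {R : Type*} [CommRing R] {t : Finset α} {a : α}
    (ha : a ∈ t) {k : ℕ} (hk : k ≠ 0) (f : α → R) :
    ∑ A ∈ powersetCard k t, (∑ j ∈ A, f j) * (if a ∈ A then 1 else 0)
      = (#t - 1).choose (k - 1) * ∑ j ∈ t, f j
        - (#t - 2).choose (k - 1) * (∑ j ∈ t, f j - f a) := by
  have hsplit := sum_filter_add_sum_filter_not (powersetCard k t) (a ∈ ·) fun A => ∑ j ∈ A, f j
  rw [filter_notMem_powersetCard, sum_powersetCard_sum _ hk, sum_powersetCard_sum _ hk,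
    card_erase_of_mem ha, Nat.sub_sub, sum_erase_eq_sub ha] at hsplit
  simp only [mul_ite, mul_one, mul_zero, ← sum_filter, nsmul_eq_mul] at hsplit ⊢
  exact eq_sub_of_add_eq hsplit

end Finset

theorem Nat.cast_choose_sub_one_sub_one {K : Type*} [Field K] [CharZero K] {n s : ℕ}
    (hn : n ≠ 0) (hs : s ≠ 0) :
    ((n - 1).choose (s - 1) : K) = s / n * n.choose s := by
  obtain ⟨m, rfl⟩ := Nat.exists_eq_succ_of_ne_zero hn
  obtain ⟨k, rfl⟩ := Nat.exists_eq_succ_of_ne_zero hs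
  have h : ((m + 1 : ℕ) : K) * m.choose k = (m + 1).choose (k + 1) * (k + 1 : ℕ) := by
    exact_mod_cast Nat.add_one_mul_choose_eq m k
  rw [div_mul_eq_mul_div, eq_div_iff (Nat.cast_ne_zero.2 hn)]
  simp only [Nat.succ_eq_add_one, Nat.add_sub_cancel]
  linear_combination h

theorem Nat.cast_choose_sub_two_sub_one {K : Type*} [Field K] [CharZero K] {n s : ℕ}
    (hs : s ≠ 0) (hsn : s < n) :
    ((n - 2).choose (s - 1) : K) = (n - s) / (n - 1) * (n - 1).choose (s - 1) := by
  obtain ⟨m, rfl⟩ : ∃ m, n = m + 2 := ⟨n - 2, by omega⟩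
  have h : (m.choose (s - 1) : K) * ((m + 1 : ℕ) : K)
      = (m + 1).choose (s - 1) * ((m + 2 - s : ℕ) : K) := by
    rw [show m + 2 - s = m + 1 - (s - 1) by omega]
    exact_mod_cast Nat.choose_mul_succ_eq m (s - 1)
  have hm : ((m + 2 : ℕ) : K) - 1 = (m + 1 : ℕ) := by push_cast; ring
  rw [hm, div_mul_eq_mul_div, eq_div_iff (Nat.cast_ne_zero.2 m.succ_ne_zero)]
  simp only [Nat.add_sub_cancel, show m + 2 - 1 = m + 1 by omega]
  rw [Nat.cast_sub hsn.le] at h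
  linear_combination h

noncomputable section

namespace UniformSubset

variable {n : ℕ} (s : ℕ)

def expect (f : Finset (Fin n) → ℝ) : ℝ := (∑ A ∈ powersetCard s univ, f A) / n.choose s

def cov (f g : Finset (Fin n) → ℝ) : ℝ := expect s (fun A => f A * g A) - expect s f * expect s g

variable {s}

theorem expect_div_const (f : Finset (Fin n) → ℝ) (c : ℝ) :
    expect s (fun A => f A / c) = expect s f / c := by
  simp only [expect, ← sum_div, div_right_comm]

theorem expect_ite_mem (hs : s ≠ 0) (hsn : s ≤ n) (i : Fin n) :
    expect s (fun A => if i ∈ A then 1 else 0) = s / n := by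
  have hn : n ≠ 0 := by omega
  have hC : (n.choose s : ℝ) ≠ 0 := by exact_mod_cast (Nat.choose_pos hsn).ne'
  rw [expect, sum_boole, card_filter_mem_powersetCard (mem_univ i) hs, card_univ,
    Fintype.card_fin, Nat.cast_choose_sub_one_sub_one hn hs, mul_div_cancel_right₀ _ hC]

theorem expect_sum (hs : s ≠ 0) (hsn : s ≤ n) (y : Fin n → ℝ) :
    expect s (fun A => ∑ j ∈ A, y j) = s / n * ∑ j, y j := by
  have hn : n ≠ 0 := by omega
  have hC : (n.choose s : ℝ) ≠ 0 := by exact_mod_cast (Nat.choose_pos hsn).ne'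
  rw [expect, sum_powersetCard_sum _ hs, nsmul_eq_mul, card_univ, Fintype.card_fin,
    Nat.cast_choose_sub_one_sub_one hn hs]
  field_simp

theorem expect_sum_mul_ite_mem (hs : s ≠ 0) (hsn : s < n) (y : Fin n → ℝ) (i : Fin n) :
    expect s (fun A => (∑ j ∈ A, y j) * if i ∈ A then 1 else 0)
      = s / n * (∑ j, y j - (n - s) / (n - 1) * (∑ j, y j - y i)) := by
  have hn : n ≠ 0 := by omega
  have hC : (n.choose s : ℝ) ≠ 0 := by exact_mod_cast (Nat.choose_pos hsn.le).ne'
  rw [expect, sum_powersetCard_sum_mul_ite_mem (mem_univ i) hs, card_univ, Fintype.card_fin,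
    Nat.cast_choose_sub_two_sub_one hs hsn, Nat.cast_choose_sub_one_sub_one hn hs]
  field_simp

theorem cov_mean_ite_mem (hs : s ≠ 0) (hsn : s < n) (y : Fin n → ℝ) (i : Fin n) :
    cov s (fun A => (∑ j ∈ A, y j) / s) (fun A => if i ∈ A then 1 else 0)
      = (n - s) / (n * (n - 1)) * (y i - (∑ j, y j) / n) := by
  have hs' : (s : ℝ) ≠ 0 := by exact_mod_cast hs
  have hn : (n : ℝ) ≠ 0 := by exact_mod_cast (by omega : n ≠ 0)
  have hn1 : (n : ℝ) - 1 ≠ 0 := sub_ne_zero.2 (by exact_mod_cast (by omega : n ≠ 1))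
  simp only [cov, div_mul_eq_mul_div]
  rw [expect_div_const, expect_div_const, expect_sum_mul_ite_mem hs hsn,
    expect_sum hs hsn.le, expect_ite_mem hs hsn.le]
  field_simp
  ring

end UniformSubset

end

/-- For trivial trees (subsample means over size-`s` subsets drawn
without replacement), the infinitesimal jackknife with finite-sample correction equals
the standard variance estimator:
`((n−1)/n)·(n/(n−s))² · Σ_i Cov(μ*, N_i)² = (1/(n(n−1))) Σ_i (y_i − ȳ)²`. -/
theorem infinitesimal_jackknife_trivial_trees
    (n s : ℕ) (hs : 1 ≤ s) (hsn : s < n)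
    (y : Fin n → ℝ) (ybar : ℝ) (hybar : ybar = (∑ i, y i) / n)
    (𝒜 : Finset (Finset (Fin n))) (h𝒜 : 𝒜 = powersetCard s univ)
    (Epp : (Finset (Fin n) → ℝ) → ℝ)
    (hEpp : Epp = fun f => (∑ A ∈ 𝒜, f A) / (n.choose s : ℝ))
    (Cov : (Finset (Fin n) → ℝ) → (Finset (Fin n) → ℝ) → ℝ)
    (hCov : Cov = fun f g => Epp (fun A => f A * g A) - Epp f * Epp g)
    (μstar : Finset (Fin n) → ℝ) (hμstar : μstar = fun A => (∑ i ∈ A, y i) / s)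
    (N : Fin n → Finset (Fin n) → ℝ)
    (hN : N = fun i A => if i ∈ A then 1 else 0) :
    ((n : ℝ) - 1) / n * ((n : ℝ) / ((n : ℝ) - s)) ^ 2 * ∑ i, (Cov μstar (N i)) ^ 2
      = (1 / ((n : ℝ) * ((n : ℝ) - 1))) * ∑ i, (y i - ybar) ^ 2 := by
  have hcov : ∀ i, Cov μstar (N i) = (n - s) / (n * (n - 1)) * (y i - ybar) := by
    intro i
    subst hN hμstar hCov hEpp h𝒜 hybar
    exact UniformSubset.cov_mean_ite_mem (by omega) hsn y i
  have hn : (n : ℝ) ≠ 0 := by exact_mod_cast (by omega : n ≠ 0)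
  have hn1 : (n : ℝ) - 1 ≠ 0 := sub_ne_zero.2 (by exact_mod_cast (by omega : n ≠ 1))
  have hns : (n : ℝ) - s ≠ 0 := sub_ne_zero.2 (by exact_mod_cast hsn.ne')
  simp_rw [hcov, mul_pow, ← mul_sum]
  field_simp
end

section
/- Let Y_1, ..., Y_n be i.i.d. square-integrable real random variables and fix 1 ≤ s < n. For a uniformly random size-s subset A of {1,...,n} (independent of the data), let μ*(A) = (1/s) Σ_{i ∈ A} Y_i and N_i(A) = 1{i ∈ A}, and define the random variable V̂_IJ = ((n−1)/n)·(n/(n−s))² · Σ_{i=1}^n Cov_A(μ*(A), N_i(A))², where Cov_A denotes covariance over the random subset A with the data held fixed. Then E[V̂_IJ] = Var((1/n) Σ_{i=1}^n Y_i) = Var(Y_1)/n; that is, V̂_IJ is exactly unbiased for the variance of the sample mean. -/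
/-!
For fixed data `y`, a uniform `s`-subset `A` contains `i` with probability `s/n`, and conditionally
on that event `A` is `i` together with a uniform `(s-1)`-subset of the remaining indices. This gives
`Cov_A(μ*(A), N_i(A)) = (n - s) / (n (n - 1)) * (y_i - ȳ)`, so the correction factor turns `V̂_IJ`
into `∑ (Y_i - Ȳ)² / (n (n - 1))`: the unbiased sample variance divided by `n`, whose expectation is
`Var(Y_1) / n = Var(Ȳ)`.
-/

open MeasureTheory ProbabilityTheory Finset

section SubsetAverage

variable {α : Type*} {u : Finset α} {k : ℕ}

/-- The expectation `E_A` over a uniformly random `k`-element subset `A` of `u`. -/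
noncomputable def subsetAvg (u : Finset α) (k : ℕ) (f : Finset α → ℝ) : ℝ :=
  (∑ A ∈ u.powersetCard k, f A) / ((#u).choose k : ℝ)

noncomputable def subsetCov (u : Finset α) (k : ℕ) (f g : Finset α → ℝ) : ℝ :=
  subsetAvg u k (fun A => f A * g A) - subsetAvg u k f * subsetAvg u k g

lemma subsetAvg_congr {f g : Finset α → ℝ} (h : ∀ A ∈ u.powersetCard k, f A = g A) :
    subsetAvg u k f = subsetAvg u k g := by
  rw [subsetAvg, subsetAvg, sum_congr rfl h]

lemma subsetAvg_const (hk : k ≤ #u) (c : ℝ) : subsetAvg u k (fun _ => c) = c := by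
  have : ((#u).choose k : ℝ) ≠ 0 := by exact_mod_cast (Nat.choose_pos hk).ne'
  rw [subsetAvg, sum_const, card_powersetCard, nsmul_eq_mul, mul_div_cancel_left₀ _ this]

lemma subsetAvg_add (f g : Finset α → ℝ) :
    subsetAvg u k (fun A => f A + g A) = subsetAvg u k f + subsetAvg u k g := by
  rw [subsetAvg, subsetAvg, subsetAvg, sum_add_distrib, add_div]

lemma subsetAvg_const_mul (c : ℝ) (f : Finset α → ℝ) :
    subsetAvg u k (fun A => c * f A) = c * subsetAvg u k f := by
  rw [subsetAvg, subsetAvg, ← mul_sum, mul_div_assoc]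

lemma subsetAvg_div_const (f : Finset α → ℝ) (c : ℝ) :
    subsetAvg u k (fun A => f A / c) = subsetAvg u k f / c := by
  rw [subsetAvg, subsetAvg, ← sum_div, div_right_comm]

lemma subsetAvg_sum {ι : Type*} (s : Finset ι) (f : ι → Finset α → ℝ) :
    subsetAvg u k (fun A => ∑ j ∈ s, f j A) = ∑ j ∈ s, subsetAvg u k (f j) := by
  rw [subsetAvg, sum_comm, sum_div]
  rfl

variable [DecidableEq α] {i : α}

lemma sum_powersetCard_succ_ite_mem {M : Type*} [AddCommMonoid M] (hi : i ∈ u)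
    (f : Finset α → M) :
    ∑ A ∈ u.powersetCard (k + 1), (if i ∈ A then f A else 0)
      = ∑ B ∈ (u.erase i).powersetCard k, f (insert i B) := by
  rw [← sum_filter]
  refine sum_nbij' (·.erase i) (insert i) ?_ ?_ ?_ ?_ ?_
  · rintro A hA
    rw [mem_filter, mem_powersetCard] at hA
    obtain ⟨⟨hAu, hcard⟩, hiA⟩ := hA
    exact mem_powersetCard.2 ⟨erase_subset_erase i hAu, by rw [card_erase_of_mem hiA, hcard]; rfl⟩
  · rintro B hB
    obtain ⟨hBu, hcard⟩ := mem_powersetCard.1 hB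
    have hiB : i ∉ B := fun h => notMem_erase i u (hBu h)
    refine mem_filter.2 ⟨mem_powersetCard.2 ⟨insert_subset hi (hBu.trans (erase_subset i u)), ?_⟩,
      mem_insert_self i B⟩
    rw [card_insert_of_notMem hiB, hcard]
  · rintro A hA
    exact insert_erase (mem_filter.1 hA).2
  · rintro B hB
    exact erase_insert fun h => notMem_erase i u ((mem_powersetCard.1 hB).1 h)
  · rintro A hA
    rw [insert_erase (mem_filter.1 hA).2]

/-- Conditioning a uniform `(k+1)`-subset of `u` on containing `i` leaves a uniform
`k`-subset of `u.erase i`, and the event has probability `(k+1)/#u`. -/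
lemma subsetAvg_mul_indicator (hi : i ∈ u) (f : Finset α → ℝ) :
    subsetAvg u (k + 1) (fun A => f A * if i ∈ A then 1 else 0)
      = (k + 1) / #u * subsetAvg (u.erase i) k (fun B => f (insert i B)) := by
  obtain ⟨m, hm⟩ : ∃ m, #u = m + 1 := Nat.exists_eq_succ_of_ne_zero (card_ne_zero_of_mem hi)
  have hchoose : ((#u).choose (k + 1) : ℝ) = (m + 1) * (m.choose k) / (k + 1) := by
    rw [hm, eq_div_iff (by positivity)]
    exact_mod_cast (Nat.add_one_mul_choose_eq m k).symm
  simp only [mul_ite, mul_one, mul_zero]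
  rw [subsetAvg, subsetAvg, sum_powersetCard_succ_ite_mem hi, card_erase_of_mem hi, hchoose, hm]
  push_cast
  rw [div_div_eq_mul_div, div_mul_div_comm, mul_comm _ ((k : ℝ) + 1)]

lemma subsetAvg_indicator (hi : i ∈ u) (hk : k ≤ #u) :
    subsetAvg u k (fun A => if i ∈ A then 1 else 0) = k / #u := by
  cases k with
  | zero => simp [subsetAvg]
  | succ m =>
    have := subsetAvg_mul_indicator (k := m) hi (fun _ => 1)
    simp only [one_mul] at this
    rw [this, subsetAvg_const (by rw [card_erase_of_mem hi]; omega), mul_one]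
    push_cast
    rfl

lemma subsetAvg_sum_mem (hk : k ≤ #u) (y : α → ℝ) :
    subsetAvg u k (fun A => ∑ j ∈ A, y j) = k / #u * ∑ j ∈ u, y j := by
  have hsum : ∀ A ∈ u.powersetCard k,
      ∑ j ∈ A, y j = ∑ j ∈ u, y j * if j ∈ A then 1 else 0 := by
    intro A hA
    simp only [mul_ite, mul_one, mul_zero]
    rw [sum_ite_mem, inter_eq_right.2 (mem_powersetCard.1 hA).1]
  simp only [subsetAvg_congr hsum, subsetAvg_sum, subsetAvg_const_mul]
  rw [mul_sum]
  exact sum_congr rfl fun j hj => by rw [subsetAvg_indicator hj hk, mul_comm]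

theorem subsetCov_mean_indicator (hi : i ∈ u) (hk : 1 ≤ k) (hku : k < #u) (y : α → ℝ) :
    subsetCov u k (fun A => (∑ j ∈ A, y j) / k) (fun A => if i ∈ A then 1 else 0)
      = (#u - k) / (#u * (#u - 1)) * (y i - (∑ j ∈ u, y j) / #u) := by
  obtain ⟨m, rfl⟩ : ∃ m, k = m + 1 := ⟨k - 1, by omega⟩
  have hu : (#u : ℝ) - 1 ≠ 0 := by
    rw [sub_ne_zero]; exact_mod_cast (show #u ≠ 1 by omega)
  have hcard_erase : #(u.erase i) = (#u - 1 : ℝ) := by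
    rw [card_erase_of_mem hi, Nat.cast_pred (card_pos.2 ⟨i, hi⟩)]
  have hsum_insert : ∀ B ∈ (u.erase i).powersetCard m,
      (∑ j ∈ insert i B, y j) / ↑(m + 1) = (y i + ∑ j ∈ B, y j) / ↑(m + 1) := by
    intro B hB
    rw [sum_insert fun h => notMem_erase i u ((mem_powersetCard.1 hB).1 h)]
  have hprod : subsetAvg u (m + 1) (fun A => (∑ j ∈ A, y j) / ↑(m + 1) * if i ∈ A then 1 else 0)
      = (m + 1) / #u * ((y i + m / (#u - 1) * (∑ j ∈ u, y j - y i)) / ↑(m + 1)) := by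
    rw [subsetAvg_mul_indicator hi, subsetAvg_congr hsum_insert, subsetAvg_div_const,
      subsetAvg_add, subsetAvg_const (by rw [card_erase_of_mem hi]; omega),
      subsetAvg_sum_mem (by rw [card_erase_of_mem hi]; omega), sum_erase_eq_sub hi, hcard_erase]
  have hmean : subsetAvg u (m + 1) (fun A => (∑ j ∈ A, y j) / ↑(m + 1))
      = (∑ j ∈ u, y j) / #u := by
    rw [subsetAvg_div_const, subsetAvg_sum_mem hku.le]
    field_simp
  have hu0 : (#u : ℝ) ≠ 0 := by exact_mod_cast (card_pos.2 ⟨i, hi⟩).ne'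
  rw [subsetCov, hprod, hmean, subsetAvg_indicator hi hku.le]
  push_cast
  field_simp
  ring

end SubsetAverage

lemma sum_sq_sub_mean {ι : Type*} (s : Finset ι) (y : ι → ℝ) :
    ∑ i ∈ s, (y i - (∑ j ∈ s, y j) / #s) ^ 2 = ∑ i ∈ s, y i ^ 2 - (∑ i ∈ s, y i) ^ 2 / #s := by
  rcases s.eq_empty_or_nonempty with rfl | hs
  · simp
  have : (#s : ℝ) ≠ 0 := by exact_mod_cast hs.card_pos.ne'
  simp only [sub_sq, sum_add_distrib, sum_sub_distrib, ← sum_mul, ← mul_sum, sum_const,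
    nsmul_eq_mul]
  field_simp
  ring

section SampleVariance

variable {Ω ι : Type*} [MeasurableSpace Ω] {μ : Measure Ω} [Fintype ι]
  {Y : ι → Ω → ℝ} {i₀ : ι}

lemma integral_sq_eq_variance_add_sq [IsProbabilityMeasure μ] {X : Ω → ℝ} (hX : MemLp X 2 μ) :
    ∫ ω, X ω ^ 2 ∂μ = variance X μ + (∫ ω, X ω ∂μ) ^ 2 := by
  rw [variance_eq_sub hX, sub_add_cancel]
  rfl

lemma variance_sum_of_identDistrib (hindep : Pairwise fun i j => IndepFun (Y i) (Y j) μ)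
    (hident : ∀ i, IdentDistrib (Y i) (Y i₀) μ μ) (hL2 : ∀ i, MemLp (Y i) 2 μ) :
    variance (fun ω => ∑ i, Y i ω) μ = Fintype.card ι * variance (Y i₀) μ := by
  rw [← sum_fn, IndepFun.variance_sum (fun i _ => hL2 i) (fun i _ j _ hij => hindep hij),
    sum_congr rfl fun i _ => (hident i).variance_eq, sum_const, card_univ, nsmul_eq_mul]

lemma variance_sampleMean (hindep : Pairwise fun i j => IndepFun (Y i) (Y j) μ)
    (hident : ∀ i, IdentDistrib (Y i) (Y i₀) μ μ) (hL2 : ∀ i, MemLp (Y i) 2 μ) :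
    variance (fun ω => (∑ i, Y i ω) / Fintype.card ι) μ = variance (Y i₀) μ / Fintype.card ι := by
  have hcard : (Fintype.card ι : ℝ) ≠ 0 := by
    exact_mod_cast (Fintype.card_pos_iff.2 ⟨i₀⟩).ne'
  have : (fun ω => (∑ i, Y i ω) / Fintype.card ι)
      = (Fintype.card ι : ℝ)⁻¹ • fun ω => ∑ i, Y i ω := by
    ext ω
    rw [Pi.smul_apply, smul_eq_mul, inv_mul_eq_div]
  rw [this, variance_smul, variance_sum_of_identDistrib hindep hident hL2]
  field_simp

lemma integral_sum_sq_sub_sampleMean [IsProbabilityMeasure μ]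
    (hindep : Pairwise fun i j => IndepFun (Y i) (Y j) μ)
    (hident : ∀ i, IdentDistrib (Y i) (Y i₀) μ μ) (hL2 : ∀ i, MemLp (Y i) 2 μ) :
    ∫ ω, ∑ i, (Y i ω - (∑ j, Y j ω) / Fintype.card ι) ^ 2 ∂μ
      = (Fintype.card ι - 1) * variance (Y i₀) μ := by
  have hcard : (Fintype.card ι : ℝ) ≠ 0 := by
    exact_mod_cast (Fintype.card_pos_iff.2 ⟨i₀⟩).ne'
  have hsumL2 : MemLp (fun ω => ∑ i, Y i ω) 2 μ := memLp_finsetSum _ fun i _ => hL2 i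
  have hsq : ∀ i, ∫ ω, Y i ω ^ 2 ∂μ = variance (Y i₀) μ + (∫ ω, Y i₀ ω ∂μ) ^ 2 := fun i => by
    rw [← integral_sq_eq_variance_add_sq (hL2 i₀)]
    exact ((hident i).comp (measurable_id.pow_const 2)).integral_eq
  have hmean : ∫ ω, ∑ i, Y i ω ∂μ = Fintype.card ι * ∫ ω, Y i₀ ω ∂μ := by
    rw [integral_finsetSum _ fun i _ => (hL2 i).integrable one_le_two,
      sum_congr rfl fun i _ => (hident i).integral_eq, sum_const, card_univ, nsmul_eq_mul]
  have hsum_sq : ∫ ω, (∑ i, Y i ω) ^ 2 ∂μ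
      = Fintype.card ι * variance (Y i₀) μ + (Fintype.card ι * ∫ ω, Y i₀ ω ∂μ) ^ 2 := by
    rw [integral_sq_eq_variance_add_sq hsumL2, variance_sum_of_identDistrib hindep hident hL2,
      hmean]
  have hexpand := fun ω => sum_sq_sub_mean univ fun i => Y i ω
  simp only [card_univ] at hexpand
  simp only [hexpand]
  rw [integral_sub (integrable_finsetSum _ fun i _ => (hL2 i).integrable_sq)
      (hsumL2.integrable_sq.div_const _), integral_finsetSum _ fun i _ => (hL2 i).integrable_sq,
    integral_div, hsum_sq, sum_congr rfl fun i _ => hsq i, sum_const, card_univ, nsmul_eq_mul]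
  field_simp
  ring

end SampleVariance

/-- For i.i.d. square-integrable `Y_1, ..., Y_n` and trivial trees
(subsample means over uniformly random size-`s` subsets, `s < n`), the infinitesimal
jackknife variance estimate with finite-sample correction is exactly unbiased for the
variance of the sample mean: `E[V̂_IJ] = Var( (1/n) Σ Y_i ) = Var(Y_1)/n`. -/
theorem infinitesimal_jackknife_unbiased_trivial_trees
    {Ω : Type*} [MeasurableSpace Ω]
    (μ : Measure Ω) [IsProbabilityMeasure μ]
    (n s : ℕ) (hs : 1 ≤ s) (hsn : s < n)
    (Y : Fin n → Ω → ℝ)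
    (hindep : iIndepFun Y μ)
    (hident : ∀ i j, IdentDistrib (Y i) (Y j) μ μ)
    (hL2 : ∀ i, MemLp (Y i) 2 μ)
    (CovA : Ω → Fin n → ℝ)
    (hCovA : CovA = fun ω i =>
      (∑ A ∈ powersetCard s (univ : Finset (Fin n)),
          ((∑ j ∈ A, Y j ω) / s) * (if i ∈ A then (1 : ℝ) else 0)) / (n.choose s : ℝ)
        - ((∑ A ∈ powersetCard s (univ : Finset (Fin n)), (∑ j ∈ A, Y j ω) / s)
            / (n.choose s : ℝ))
          * ((∑ A ∈ powersetCard s (univ : Finset (Fin n)),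
              (if i ∈ A then (1 : ℝ) else 0)) / (n.choose s : ℝ)))
    (VIJ : Ω → ℝ)
    (hVIJ : VIJ = fun ω =>
      ((n : ℝ) - 1) / n * ((n : ℝ) / ((n : ℝ) - s)) ^ 2 * ∑ i, (CovA ω i) ^ 2) :
    (∫ ω, VIJ ω ∂μ = variance (fun ω => (∑ i, Y i ω) / n) μ) ∧
    variance (fun ω => (∑ i, Y i ω) / n) μ
      = variance (Y ⟨0, by omega⟩) μ / n := by
  have hpair : Pairwise fun i j => IndepFun (Y i) (Y j) μ := fun i j hij => hindep.indepFun hij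
  have hY₀ := fun i => hident i ⟨0, by omega⟩
  have hmean := variance_sampleMean hpair hY₀ hL2
  have hsample := integral_sum_sq_sub_sampleMean hpair hY₀ hL2
  rw [Fintype.card_fin] at hmean hsample
  have hcov : ∀ ω i, CovA ω i = (n - s) / (n * (n - 1)) * (Y i ω - (∑ j, Y j ω) / n) := by
    intro ω i
    have := subsetCov_mean_indicator (mem_univ i) hs (by rwa [card_univ, Fintype.card_fin])
      fun j => Y j ω
    simp only [subsetCov, subsetAvg, card_univ, Fintype.card_fin] at this
    rw [hCovA]
    exact this
  have hn : (n : ℝ) - 1 ≠ 0 := by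
    rw [sub_ne_zero]; exact_mod_cast (show n ≠ 1 by omega)
  have hns : (n : ℝ) - s ≠ 0 := by
    rw [sub_ne_zero]; exact_mod_cast hsn.ne'
  have hVIJ' : VIJ = fun ω => (∑ i, (Y i ω - (∑ j, Y j ω) / n) ^ 2) / (n * (n - 1)) := by
    rw [hVIJ]
    ext ω
    simp only [hcov, mul_pow, ← mul_sum]
    field_simp
  refine ⟨?_, hmean⟩
  rw [hVIJ', integral_div, hsample, hmean]
  field_simp
end

section
/- Let d, k, s be positive integers with s ≥ k, and let x_1, ..., x_s ∈ (0,∞)^d be points such that for every coordinate j ∈ {1,...,d} the values x_{1j}, ..., x_{sj} are pairwise distinct. Then x_1 is a k-PNN of the origin 0 ∈ ℝ^d if and only if the number of indices i ∈ {2,...,s} with x_{ij} ≤ x_{1j} for all j = 1,...,d is at most 2k − 2. -/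
open Finset

/-- `p` lies in the axis-aligned closed hyperrectangle with vertices `a` and `b`. -/
def inRect {d : ℕ} (a b p : Fin d → ℝ) : Prop :=
  ∀ j, min (a j) (b j) ≤ p j ∧ p j ≤ max (a j) (b j)

/-- `X i` is a potential nearest neighbor (PNN) of `x`: the smallest axis-aligned
hyperrectangle with vertices `x` and `X i` contains no other point `X j`. -/
def isPNN {d s : ℕ} (x : Fin d → ℝ) (X : Fin s → Fin d → ℝ) (i : Fin s) : Prop :=
  ∀ j, j ≠ i → ¬ inRect x (X i) (X j)

/-- `Λ` is a PNN `k`-set of `x`: a set of between `k` and `2k−1` sample points for which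
some axis-aligned hyperrectangle contains `x` and `Λ` and no other sample point. -/
def isPNNkSet {d s : ℕ} (k : ℕ) (x : Fin d → ℝ) (X : Fin s → Fin d → ℝ)
    (Λ : Finset (Fin s)) : Prop :=
  k ≤ Λ.card ∧ Λ.card ≤ 2 * k - 1 ∧
    ∃ a b : Fin d → ℝ, inRect a b x ∧ (∀ i ∈ Λ, inRect a b (X i)) ∧
      ∀ i ∉ Λ, ¬ inRect a b (X i)

/-- `X i` is a `k`-PNN of `x`: some PNN `k`-set of `x` contains `X i`. -/
def isKPNN {d s : ℕ} (k : ℕ) (x : Fin d → ℝ) (X : Fin s → Fin d → ℝ) (i : Fin s) : Prop :=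
  ∃ Λ : Finset (Fin s), isPNNkSet k x X Λ ∧ i ∈ Λ

/-- For points in `(0,∞)^d` with pairwise distinct coordinates in every
dimension, `x_1` is a `k`-PNN of the origin iff at most `2k − 2` of the other points are
coordinatewise dominated by `x_1`. -/
theorem kPNN_origin_iff_dominated_count
    (d k s : ℕ) (hd : 1 ≤ d) (hk : 1 ≤ k) (hks : k ≤ s)
    (X : Fin s → Fin d → ℝ)
    (hpos : ∀ i j, 0 < X i j)
    (hdist : ∀ j, Function.Injective (fun i => X i j))
    (i0 : Fin s) (hi0 : (i0 : ℕ) = 0) :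
    isKPNN k 0 X i0 ↔
      (univ.filter (fun i => i ≠ i0 ∧ ∀ j, X i j ≤ X i0 j)).card ≤ 2 * k - 2 := by
  classical
  have hDi0 : i0 ∉ univ.filter (fun i => i ≠ i0 ∧ ∀ j, X i j ≤ X i0 j) := by simp
  constructor
  · rintro ⟨Λ, ⟨hk1, hk2, a, b, hab0, habΛ, habc⟩, hi0Λ⟩
    have hsub : insert i0 (univ.filter (fun i => i ≠ i0 ∧ ∀ j, X i j ≤ X i0 j)) ⊆ Λ := by
      intro i hi
      rcases Finset.mem_insert.mp hi with rfl | hi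
      · exact hi0Λ
      · rw [Finset.mem_filter] at hi
        by_contra hnot
        apply habc i hnot
        intro j
        refine ⟨(hab0 j).1.trans (le_of_lt (hpos i j)), (hi.2.2 j).trans (habΛ i0 hi0Λ j).2⟩
    have hle := Finset.card_le_card hsub
    rw [Finset.card_insert_of_notMem hDi0] at hle
    omega
  · intro hcard
    -- growth step: any box set of size < s can be enlarged by exactly one point
    have growth : ∀ c : Fin d → ℝ,
        (univ.filter (fun i => ∀ j, X i j ≤ c j)).card < s →
        ∃ i, i ∉ univ.filter (fun i => ∀ j, X i j ≤ c j) ∧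
          univ.filter (fun l => ∀ j, X l j ≤ max (c j) (X i j)) =
            insert i (univ.filter (fun i => ∀ j, X i j ≤ c j)) := by
      intro c hlt
      set Λ : Finset (Fin s) := univ.filter (fun i => ∀ j, X i j ≤ c j) with hΛ
      have hne : (univ \ Λ).Nonempty := by
        rw [Finset.sdiff_nonempty]
        intro hsub
        have := Finset.card_le_card hsub
        simp only [Finset.card_univ, Fintype.card_fin] at this
        omega
      obtain ⟨i, hi, hmin⟩ := Finset.exists_min_image (univ \ Λ)
        (fun p => ((univ \ Λ).filter (fun l => ∀ j, X l j ≤ max (c j) (X p j))).card) hne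
      have hiΛ : i ∉ Λ := (Finset.mem_sdiff.mp hi).2
      have hiS : i ∈ (univ \ Λ).filter (fun l => ∀ j, X l j ≤ max (c j) (X i j)) := by
        refine Finset.mem_filter.mpr ⟨hi, fun j => le_max_right _ _⟩
      -- the only new point in the enlarged box is i itself
      have hkey : ∀ l ∈ (univ \ Λ).filter (fun l => ∀ j, X l j ≤ max (c j) (X i j)), l = i := by
        intro l hl
        by_contra hne'
        rw [Finset.mem_filter, Finset.mem_sdiff] at hl
        obtain ⟨⟨-, hlΛ⟩, hlle⟩ := hl
        have hinot : i ∉ (univ \ Λ).filter (fun m => ∀ j, X m j ≤ max (c j) (X l j)) := by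
          intro hmem
          rw [Finset.mem_filter] at hmem
          -- antisymmetry using distinct coordinates
          have : ∃ j, ¬ X l j ≤ c j := by
            by_contra hall
            push_neg at hall
            exact hlΛ (Finset.mem_filter.mpr ⟨Finset.mem_univ _, hall⟩)
          obtain ⟨m, hm⟩ := this
          have h1 : X l m ≤ X i m := by
            have := hlle m
            rcases le_max_iff.mp this with h | h
            · exact absurd h hm
            · exact h
          have h2 : X i m ≤ X l m := by
            have := hmem.2 m
            rcases le_max_iff.mp this with h | h
            · exact absurd (h1.trans h) hm
            · exact h
          exact hne' (hdist m (by simpa using le_antisymm h1 h2))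
        have hsub2 : (univ \ Λ).filter (fun m => ∀ j, X m j ≤ max (c j) (X l j)) ⊆
            ((univ \ Λ).filter (fun m => ∀ j, X m j ≤ max (c j) (X i j))).erase i := by
          intro m hm
          rw [Finset.mem_filter] at hm
          refine Finset.mem_erase.mpr ⟨?_, Finset.mem_filter.mpr ⟨hm.1, fun j => ?_⟩⟩
          · rintro rfl; exact hinot (Finset.mem_filter.mpr hm)
          · exact (hm.2 j).trans (max_le (le_max_left _ _) (hlle j))
        have hlt2 := Finset.card_le_card hsub2
        rw [Finset.card_erase_of_mem hiS] at hlt2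
        have hpos' : 0 < ((univ \ Λ).filter (fun m => ∀ j, X m j ≤ max (c j) (X i j))).card :=
          Finset.card_pos.mpr ⟨i, hiS⟩
        have := hmin l (Finset.mem_sdiff.mpr ⟨Finset.mem_univ _, hlΛ⟩)
        omega
      refine ⟨i, hiΛ, ?_⟩
      ext m
      simp only [Finset.mem_filter, Finset.mem_univ, true_and, Finset.mem_insert]
      constructor
      · intro hm
        by_cases hmΛ : m ∈ Λ
        · exact Or.inr (by simpa [hΛ] using hmΛ)
        · left
          exact hkey m (Finset.mem_filter.mpr
            ⟨Finset.mem_sdiff.mpr ⟨Finset.mem_univ _, hmΛ⟩, hm⟩)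
      · rintro (rfl | hm)
        · exact fun j => le_max_right _ _
        · exact fun j => ((Finset.mem_filter.mp hm).2 j).trans (le_max_left _ _)
    -- induction: a box set of every size from |D|+1 to s exists
    have main : ∀ n, (insert i0 (univ.filter (fun i => i ≠ i0 ∧ ∀ j, X i j ≤ X i0 j))).card ≤ n →
        n ≤ s →
        ∃ c : Fin d → ℝ, (∀ j, X i0 j ≤ c j) ∧
          (univ.filter (fun i => ∀ j, X i j ≤ c j)).card = n := by
      intro n
      induction n with
      | zero =>
        intro h1 _
        rw [Finset.card_insert_of_notMem hDi0] at h1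
        omega
      | succ n ih =>
        intro h1 h2
        by_cases hcase : (insert i0 (univ.filter (fun i => i ≠ i0 ∧ ∀ j, X i j ≤ X i0 j))).card ≤ n
        · obtain ⟨c, hc1, hc2⟩ := ih hcase (by omega)
          obtain ⟨i, hiΛ, heq⟩ := growth c (by omega)
          refine ⟨fun j => max (c j) (X i j), fun j => (hc1 j).trans (le_max_left _ _), ?_⟩
          rw [heq, Finset.card_insert_of_notMem hiΛ, hc2]
        · -- base case: c = X i0
          have hn1 : (insert i0 (univ.filter (fun i => i ≠ i0 ∧ ∀ j, X i j ≤ X i0 j))).card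
              = n + 1 := by omega
          refine ⟨X i0, fun j => le_refl _, ?_⟩
          rw [← hn1]
          congr 1
          ext m
          simp only [Finset.mem_filter, Finset.mem_univ, true_and, Finset.mem_insert]
          constructor
          · intro hm
            by_cases hmi : m = i0
            · exact Or.inl hmi
            · exact Or.inr ⟨hmi, hm⟩
          · rintro (rfl | ⟨-, hm⟩)
            · exact fun j => le_refl _
            · exact hm
    have hDs : (univ.filter (fun i => i ≠ i0 ∧ ∀ j, X i j ≤ X i0 j)).card + 1 ≤ s := by
      have := Finset.card_le_card (Finset.subset_univ
        (insert i0 (univ.filter (fun i => i ≠ i0 ∧ ∀ j, X i j ≤ X i0 j))))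
      rw [Finset.card_insert_of_notMem hDi0] at this
      simpa using this
    set n := max k ((univ.filter (fun i => i ≠ i0 ∧ ∀ j, X i j ≤ X i0 j)).card + 1) with hn
    obtain ⟨c, hc1, hc2⟩ := main n
      (by rw [Finset.card_insert_of_notMem hDi0]; omega) (by omega)
    refine ⟨univ.filter (fun i => ∀ j, X i j ≤ c j), ⟨by omega, by omega,
      0, c, ?_, ?_, ?_⟩, ?_⟩
    · intro j
      have : 0 < c j := lt_of_lt_of_le (hpos i0 j) (hc1 j)
      constructor
      · simp [min_le_iff]
      · simp [le_max_iff]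
    · intro i hi j
      rw [Finset.mem_filter] at hi
      refine ⟨?_, ?_⟩
      · have := (hpos i j).le
        simp only [Pi.zero_apply]
        exact (min_le_left _ _).trans this
      · exact (hi.2 j).trans (le_max_right _ _)
    · intro i hi hrect
      apply hi
      refine Finset.mem_filter.mpr ⟨Finset.mem_univ _, fun j => ?_⟩
      have := (hrect j).2
      simp only [Pi.zero_apply] at this
      have hc0 : (0:ℝ) ≤ c j := le_of_lt (lt_of_lt_of_le (hpos i0 j) (hc1 j))
      rwa [max_eq_right hc0] at this
    · exact Finset.mem_filter.mpr ⟨Finset.mem_univ _, hc1⟩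
end

section
/- Let d, k ≥ 1 and s ≥ k be integers, and let X_1, ..., X_s be i.i.d. random vectors uniformly distributed on [0,1]^d. Let P_1 = 1{X_1 is a k-PNN of the origin among X_1,...,X_s}. Then, almost surely, E[P_1 | X_1] = F_{s−1, p}(2k−2) evaluated at p = ∏_{j=1}^d X_{1j}, where F_{m,p}(r) = P(Binomial(m,p) ≤ r) denotes the Binomial(m,p) cumulative distribution function at r. -/
open MeasureTheory ProbabilityTheory Finset
open scoped Classical

/-- The `Binomial(m, p)` cumulative distribution function evaluated at `r`. -/
noncomputable def binomCDF (m : ℕ) (p : ℝ) (r : ℕ) : ℝ :=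
  ∑ j ∈ Finset.range (r + 1), (m.choose j : ℝ) * p ^ j * (1 - p) ^ (m - j)

/-! Almost surely the sample is generic: all points lie in the unit cube and no two distinct
points share a coordinate value. For a generic sample, `X i0` is a `k`-PNN of the origin iff the
box `[0, X i0]` contains at most `2k - 2` other points. Indeed, every rectangle containing `0` and
`X i0` contains that box; conversely, if the box holds fewer than `k` points, enlarging it to
`[0, X i0 ⊔ t]` lets the points enter one at a time, so at some `t` it holds exactly `k` of them.
Given `X i0 = x`, the other `s - 1` points are independent and uniform, and each falls in
`[0, x]` with probability `∏ j, x j`; so the count is `Binomial(s - 1, ∏ j, x j)`. -/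

open scoped NNReal

theorem exists_card_filter_le_eq {ι α : Type*} [Fintype ι] [LinearOrder α] (v : ι → α) {t₀ : α}
    (hv : Set.InjOn v {i | t₀ < v i}) {k : ℕ} (hk₀ : #{i | v i ≤ t₀} ≤ k)
    (hk : k ≤ Fintype.card ι) : ∃ t, t₀ ≤ t ∧ #{i | v i ≤ t} = k := by
  induction k, hk₀ using Nat.le_induction with
  | base => exact ⟨t₀, le_rfl, rfl⟩
  | succ k hk₀ ih =>
    obtain ⟨t, ht₀, ht⟩ := ih (by omega)
    obtain ⟨i₁, hi₁⟩ : ∃ i, t < v i := by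
      by_contra! h
      rw [filter_true_of_mem fun i _ => h i, card_univ] at ht
      omega
    obtain ⟨m, hm, hmin⟩ :=
      exists_min_image (univ.filter fun i => t < v i) v ⟨i₁, (mem_filter_univ i₁).2 hi₁⟩
    rw [mem_filter_univ] at hm
    -- `m` is the first point above `t`, and by injectivity the only one at level `v m`
    have : (univ.filter fun i => v i ≤ v m) = insert m (univ.filter fun i => v i ≤ t) := by
      ext i
      simp only [mem_filter_univ, mem_insert]
      refine ⟨fun hi => ?_, ?_⟩
      · by_cases hit : v i ≤ t
        · exact .inr hit
        · have hit : t < v i := lt_of_not_ge hit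
          exact .inl (hv (ht₀.trans_lt hit) (ht₀.trans_lt hm)
            (hi.antisymm (hmin i ((mem_filter_univ i).2 hit))))
      · rintro (rfl | hit)
        exacts [le_rfl, hit.trans hm.le]
    refine ⟨v m, ht₀.trans hm.le, ?_⟩
    rw [this, card_insert_of_notMem (by simpa using hm), ht]

noncomputable def entryTime {ι : Type*} [Fintype ι] (x p : ι → ℝ) : ℝ≥0 :=
  univ.sup fun j => if p j ≤ x j then 0 else (p j).toNNReal

theorem entryTime_le_iff {ι : Type*} [Fintype ι] {x p : ι → ℝ} {t : ℝ≥0} :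
    entryTime x p ≤ t ↔ p ≤ x ⊔ fun _ => (t : ℝ) := by
  simp only [entryTime, Finset.sup_le_iff, mem_univ, true_implies, Pi.le_def, Pi.sup_apply,
    le_sup_iff]
  refine forall_congr' fun j => ?_
  split_ifs with h
  · simp [h]
  · simp [h, Real.toNNReal_le_iff_le_coe]

theorem exists_eq_entryTime {ι : Type*} [Fintype ι] {x p : ι → ℝ} (h : 0 < entryTime x p) :
    ∃ j, x j < p j ∧ entryTime x p = (p j).toNNReal := by
  have hne : (univ : Finset ι).Nonempty := by
    by_contra! he
    simp [entryTime, he] at h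
  obtain ⟨j, -, hj⟩ := exists_mem_eq_sup _ hne fun j => if p j ≤ x j then 0 else (p j).toNNReal
  rw [← entryTime] at hj
  split_ifs at hj with hpx
  · exact absurd hj h.ne'
  · exact ⟨j, lt_of_not_ge hpx, hj⟩

theorem inRect_zero_left_iff {d : ℕ} {b p : Fin d → ℝ} (hb : 0 ≤ b) :
    inRect 0 b p ↔ p ∈ Set.Icc 0 b := by
  simp only [inRect, Pi.zero_apply, Set.mem_Icc, Pi.le_def, ← forall_and]
  exact forall_congr' fun j => by
    have hbj : (0 : ℝ) ≤ b j := hb j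
    rw [min_eq_left hbj, max_eq_right hbj]

theorem inRect_of_mem_Icc {d : ℕ} {a b p q z : Fin d → ℝ} (hp : inRect a b p) (hq : inRect a b q)
    (hz : z ∈ Set.Icc p q) : inRect a b z := fun j =>
  ⟨(hp j).1.trans (hz.1 j), (hz.2 j).trans (hq j).2⟩

theorem card_filter_univ_coe {α : Type*} (T : Finset α) (p : α → Prop) [DecidablePred p] :
    #{i : T | p i} = #{i ∈ T | p i} := by
  rw [univ_eq_attach, filter_attach, card_map, card_attach]

section KPNN

variable {d s k : ℕ} {y : Fin s → Fin d → ℝ} {i0 : Fin s}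

theorem card_filter_le_of_isKPNN (hy : ∀ i, 0 ≤ y i) (h : isKPNN k 0 y i0) :
    #{i ∈ {i0}ᶜ | y i ≤ y i0} ≤ 2 * k - 2 := by
  obtain ⟨Λ, ⟨-, hΛ, a, b, h0, hin, hout⟩, hi0⟩ := h
  have hsub : ({i ∈ {i0}ᶜ | y i ≤ y i0} : Finset (Fin s)) ⊆ Λ.erase i0 := by
    intro i hi
    rw [mem_filter, mem_compl, mem_singleton] at hi
    refine mem_erase.2 ⟨hi.1, ?_⟩
    by_contra hiΛ
    exact hout i hiΛ (inRect_of_mem_Icc h0 (hin i0 hi0) ⟨hy i, hi.2⟩)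
  have := card_le_card hsub
  rw [card_erase_of_mem hi0] at this
  omega

theorem isKPNN_of_le_of_card_filter_le (hy : ∀ i, 0 ≤ y i) {b : Fin d → ℝ} (hb : y i0 ≤ b)
    (hk : k ≤ #{i | y i ≤ b}) (hk' : #{i | y i ≤ b} ≤ 2 * k - 1) : isKPNN k 0 y i0 := by
  have hb0 : 0 ≤ b := (hy i0).trans hb
  refine ⟨univ.filter fun i => y i ≤ b,
    ⟨hk, hk', 0, b, ?_, fun i hi => ?_, fun i hi hrect => hi ?_⟩, ?_⟩
  · exact (inRect_zero_left_iff hb0).2 ⟨le_rfl, hb0⟩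
  · exact (inRect_zero_left_iff hb0).2 ⟨hy i, (mem_filter_univ i).1 hi⟩
  · exact (mem_filter_univ i).2 ((inRect_zero_left_iff hb0).1 hrect).2
  · exact (mem_filter_univ i0).2 hb

theorem isKPNN_of_card_filter_le (hy : ∀ i, 0 ≤ y i)
    (hgen : ∀ i i', i ≠ i' → ∀ j j', y i j ≠ y i' j') (hk : 1 ≤ k) (hks : k ≤ s)
    (h : #{i ∈ {i0}ᶜ | y i ≤ y i0} ≤ 2 * k - 2) : isKPNN k 0 y i0 := by
  have hcard : #{i | y i ≤ y i0} = #{i ∈ {i0}ᶜ | y i ≤ y i0} + 1 := by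
    have : filter (fun i => y i ≤ y i0) {i0}ᶜ = (univ.filter fun i => y i ≤ y i0).erase i0 := by
      ext i
      simp
    rw [this, card_erase_of_mem (by simp)]
    have : 0 < #{i | y i ≤ y i0} := card_pos.2 ⟨i0, by simp⟩
    omega
  by_cases hkS : k ≤ #{i | y i ≤ y i0}
  · exact isKPNN_of_le_of_card_filter_le hy le_rfl hkS (by omega)
  -- grow the box `[0, y i0 ⊔ t]`: by genericity, points enter it one at a time
  set v : Fin s → ℝ≥0 := fun i => entryTime (y i0) (y i)
  have hv : ∀ i t, v i ≤ t ↔ y i ≤ y i0 ⊔ fun _ => (t : ℝ) := fun i t => entryTime_le_iff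
  have hv0 : ∀ i, v i ≤ 0 ↔ y i ≤ y i0 := fun i => by
    rw [hv, NNReal.coe_zero, show (fun _ => (0 : ℝ)) = 0 from rfl, sup_eq_left.2 (hy i0)]
  have hinj : Set.InjOn v {i | 0 < v i} := by
    intro i hi i' hi' hii'
    obtain ⟨j, hj, hvj⟩ := exists_eq_entryTime hi
    obtain ⟨j', hj', hvj'⟩ := exists_eq_entryTime hi'
    by_contra hne
    refine hgen i i' hne j j' ?_
    have := hvj.symm.trans (hii'.trans hvj')
    rwa [Real.toNNReal_eq_toNNReal_iff ((hy i0 j).trans hj.le) ((hy i0 j').trans hj'.le)] at this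
  obtain ⟨t, -, ht⟩ := exists_card_filter_le_eq v hinj (k := k) (by simp only [hv0]; omega)
    (by simpa using hks)
  simp only [hv] at ht
  exact isKPNN_of_le_of_card_filter_le hy le_sup_left ht.ge (by omega)

theorem isKPNN_iff_card_filter_le (hy : ∀ i, 0 ≤ y i)
    (hgen : ∀ i i', i ≠ i' → ∀ j j', y i j ≠ y i' j') (hk : 1 ≤ k) (hks : k ≤ s) :
    isKPNN k 0 y i0 ↔ #{i ∈ {i0}ᶜ | y i ≤ y i0} ≤ 2 * k - 2 :=
  ⟨card_filter_le_of_isKPNN hy, isKPNN_of_card_filter_le hy hgen hk hks⟩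

end KPNN

theorem ProbabilityTheory.IndepFun.ae_ne {Ω α : Type*} {mΩ : MeasurableSpace Ω}
    [MeasurableSpace α] [MeasurableEq α] {μ : Measure Ω} [IsFiniteMeasure μ] {U V : Ω → α}
    (hU : Measurable U) (hV : Measurable V) (hUV : IndepFun U V μ)
    [NullSingletonClass (μ.map U)] : ∀ᵐ ω ∂μ, U ω ≠ V ω := by
  have hdiag : ((μ.map U).prod (μ.map V)) (Set.diagonal α) = 0 := by
    rw [Measure.prod_apply_symm measurableSet_diagonal]
    simp [Set.preimage]
  rw [← (indepFun_iff_map_prod_eq_prod_map_map hU.aemeasurable hV.aemeasurable).1 hUV,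
    Measure.map_apply (hU.prodMk hV) measurableSet_diagonal] at hdiag
  exact measure_eq_zero_iff_ae_notMem.1 hdiag

theorem ProbabilityTheory.IndepFun.condExp_ae_eq_integral_map {Ω β γ F : Type*}
    {mΩ : MeasurableSpace Ω} {mβ : MeasurableSpace β} [MeasurableSpace γ] [StandardBorelSpace γ]
    [Nonempty γ] [NormedAddCommGroup F] [NormedSpace ℝ F] [CompleteSpace F]
    {μ : Measure Ω} [IsFiniteMeasure μ] {X : Ω → β} {Y : Ω → γ}
    (hX : Measurable X) (hY : Measurable Y) (hXY : IndepFun X Y μ) {f : β × γ → F}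
    (hf : StronglyMeasurable f) (hint : Integrable (fun ω => f (X ω, Y ω)) μ) :
    μ[fun ω => f (X ω, Y ω) | mβ.comap X] =ᵐ[μ] fun ω => ∫ y, f (X ω, y) ∂(μ.map Y) := by
  have hlaw : μ.map (fun ω => (X ω, Y ω)) = μ.map X ⊗ₘ Kernel.const β (μ.map Y) := by
    rw [Measure.compProd_const,
      (indepFun_iff_map_prod_eq_prod_map_map hX.aemeasurable hY.aemeasurable).1 hXY]
  filter_upwards [condExp_prod_ae_eq_integral_condDistrib hX hY.aemeasurable hf hint,
    ae_of_ae_map hX.aemeasurable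
      (condDistrib_ae_eq_of_measure_eq_compProd X hY.aemeasurable hlaw)] with ω h1 h2
  rw [h1, h2, Kernel.const_apply]

theorem measurable_card_filter {ι β : Type*} [Fintype ι] [MeasurableSpace β] {p : ι → β → Prop}
    [∀ b, DecidablePred (p · b)]
    (hp : ∀ i, MeasurableSet {b | p i b}) : Measurable fun b => #{i | p i b} := by
  simp_rw [card_filter]
  exact Finset.measurable_sum _ fun i _ => Measurable.ite (hp i) measurable_const measurable_const

theorem setOf_filter_mem_eq {ι α : Type*} [Fintype ι] (E : Set α) [DecidablePred (· ∈ E)]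
    (T : Finset ι) :
    {z : ι → α | univ.filter (fun i => z i ∈ E) = T} =
      Set.univ.pi fun i => if i ∈ T then E else Eᶜ := by
  ext z
  simp only [Set.mem_ofPred_eq, Set.mem_pi, Set.mem_univ, true_implies, Finset.ext_iff,
    mem_filter_univ]
  refine forall_congr' fun i => ?_
  split_ifs with hi <;> simp [hi]

section BinomialCount

variable {ι α : Type*} [Fintype ι] [MeasurableSpace α] (ρ : Measure α) [IsProbabilityMeasure ρ]
  {E : Set α} [DecidablePred (· ∈ E)]

theorem measureReal_pi_filter_mem_eq (hE : MeasurableSet E) (T : Finset ι) :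
    (Measure.pi fun _ : ι => ρ).real {z | univ.filter (fun i => z i ∈ E) = T} =
      ρ.real E ^ #T * (1 - ρ.real E) ^ (Fintype.card ι - #T) := by
  rw [setOf_filter_mem_eq, measureReal_def, Measure.pi_pi, ENNReal.toReal_prod]
  simp_rw [apply_ite (fun F => (ρ F).toReal), ← measureReal_def, probReal_compl_eq_one_sub hE]
  rw [prod_ite, prod_const, prod_const, filter_mem_eq_inter, univ_inter, ← card_compl]
  congr 3
  ext
  simp

theorem measureReal_pi_card_filter_mem_eq (hE : MeasurableSet E) (j : ℕ) :
    (Measure.pi fun _ : ι => ρ).real {z | #{i | z i ∈ E} = j} =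
      (Fintype.card ι).choose j * ρ.real E ^ j * (1 - ρ.real E) ^ (Fintype.card ι - j) := by
  have : {z : ι → α | #{i | z i ∈ E} = j} =
      ⋃ T ∈ powersetCard j univ, {z | univ.filter (fun i => z i ∈ E) = T} := by
    ext z
    simp
  rw [this, measureReal_biUnion_finset]
  · rw [sum_congr rfl fun T hT => by
        rw [measureReal_pi_filter_mem_eq ρ hE T, (mem_powersetCard.1 hT).2],
      sum_const, card_powersetCard, card_univ, nsmul_eq_mul, mul_assoc]
  · intro T _ T' _ hTT'
    exact Set.disjoint_left.2 fun z hz hz' => hTT' (hz.symm.trans hz')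
  · intro T _
    rw [setOf_filter_mem_eq]
    exact .univ_pi fun i => by split_ifs; exacts [hE, hE.compl]

theorem measureReal_pi_card_filter_mem_le (hE : MeasurableSet E) (r : ℕ) :
    (Measure.pi fun _ : ι => ρ).real {z | #{i | z i ∈ E} ≤ r} =
      binomCDF (Fintype.card ι) (ρ.real E) r := by
  have : {z : ι → α | #{i | z i ∈ E} ≤ r} = ⋃ j ∈ range (r + 1), {z | #{i | z i ∈ E} = j} := by
    ext z
    simp
  rw [this, measureReal_biUnion_finset, binomCDF]
  · exact sum_congr rfl fun j _ => measureReal_pi_card_filter_mem_eq ρ hE j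
  · intro j _ j' _ hjj'
    exact Set.disjoint_left.2 fun z hz hz' => hjj' (hz.symm.trans hz')
  · exact fun j _ =>
      measurable_card_filter (fun i => measurable_pi_apply i hE) (measurableSet_singleton j)

end BinomialCount

instance : IsProbabilityMeasure ((volume : Measure ℝ).restrict (Set.Icc 0 1)) :=
  ⟨by simp⟩

section UniformCube

variable {κ : Type*} [Fintype κ]

theorem ae_mem_Icc_pi_restrict_Icc :
    ∀ᵐ x ∂(Measure.pi fun _ : κ => (volume : Measure ℝ).restrict (Set.Icc 0 1)),
      x ∈ Set.Icc 0 1 := by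
  filter_upwards [ae_all_iff.2 fun j => (Measure.quasiMeasurePreserving_eval _ j).ae
    (ae_restrict_mem measurableSet_Icc)] with x hx
  exact ⟨fun j => (hx j).1, fun j => (hx j).2⟩

theorem measureReal_pi_restrict_Icc_Iic {x : κ → ℝ} (hx : x ∈ Set.Icc 0 1) :
    (Measure.pi fun _ : κ => (volume : Measure ℝ).restrict (Set.Icc 0 1)).real (Set.Iic x) =
      ∏ j, x j := by
  rw [← Set.pi_univ_Iic, measureReal_def, Measure.pi_pi, ENNReal.toReal_prod]
  refine prod_congr rfl fun j _ => ?_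
  have : Set.Iic (x j) ∩ Set.Icc 0 1 = Set.Icc 0 (x j) := by
    ext t
    simp only [Set.mem_inter_iff, Set.mem_Iic, Set.mem_Icc]
    constructor
    · exact fun h => ⟨h.2.1, h.1⟩
    · exact fun h => ⟨h.2, h.1, h.2.trans (hx.2 j)⟩
  rw [Measure.restrict_apply measurableSet_Iic, this, Real.volume_Icc, sub_zero,
    ENNReal.toReal_ofReal (hx.1 j)]

theorem measureReal_pi_card_filter_le_le {ι : Type*} [Fintype ι] {x : κ → ℝ}
    (hx : x ∈ Set.Icc 0 1) (r : ℕ) :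
    (Measure.pi fun _ : ι => Measure.pi fun _ : κ =>
      (volume : Measure ℝ).restrict (Set.Icc 0 1)).real {z | #{i | z i ≤ x} ≤ r} =
      binomCDF (Fintype.card ι) (∏ j, x j) r := by
  rw [← measureReal_pi_restrict_Icc_Iic hx]
  convert measureReal_pi_card_filter_mem_le (E := Set.Iic x)
    (Measure.pi fun _ : κ => (volume : Measure ℝ).restrict (Set.Icc 0 1)) measurableSet_Iic r
  exact Set.mem_Iic.symm

end UniformCube

section Independence

variable {Ω ι β : Type*} [MeasurableSpace Ω] {μ : Measure Ω} [MeasurableSpace β] {f : ι → Ω → β}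

theorem ProbabilityTheory.iIndepFun.indepFun_compl_singleton [Fintype ι] [DecidableEq ι]
    (hf : iIndepFun f μ) (hmeas : ∀ i, Measurable (f i)) (i0 : ι) :
    IndepFun (f i0) (fun ω (i : ↥({i0}ᶜ : Finset ι)) => f i ω) μ :=
  (hf.indepFun_finset {i0} {i0}ᶜ disjoint_compl_right hmeas).comp
    (measurable_pi_apply (⟨i0, mem_singleton_self i0⟩ : ↥({i0} : Finset ι))) measurable_id

theorem ProbabilityTheory.iIndepFun.map_restrict_eq_pi [IsProbabilityMeasure μ] (hf : iIndepFun f μ)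
    (hmeas : ∀ i, Measurable (f i)) {ρ : Measure β} (hρ : ∀ i, μ.map (f i) = ρ) (T : Finset ι) :
    μ.map (fun ω (i : T) => f i ω) = Measure.pi fun _ => ρ := by
  rw [(iIndepFun_iff_map_fun_eq_pi_map (f := fun i : T => f i)
    fun i => (hmeas i).aemeasurable).1
    (hf.precomp (g := ((↑) : T → ι)) Subtype.val_injective)]
  simp only [hρ]

end Independence

section UniformSample

variable {Ω ι κ : Type*} [MeasurableSpace Ω] {μ : Measure Ω} [Countable ι] [Fintype κ]
  {X : ι → Ω → κ → ℝ}

theorem ae_forall_mem_Icc_of_map_eq (hmeas : ∀ i, Measurable (X i))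
    (hunif : ∀ i, μ.map (X i) = Measure.pi fun _ : κ => volume.restrict (Set.Icc 0 1)) :
    ∀ᵐ ω ∂μ, ∀ i, X i ω ∈ Set.Icc 0 1 :=
  ae_all_iff.2 fun i => ae_of_ae_map (hmeas i).aemeasurable <| by
    rw [hunif i]; exact ae_mem_Icc_pi_restrict_Icc

theorem ae_forall_ne_of_iIndepFun [IsProbabilityMeasure μ] (hmeas : ∀ i, Measurable (X i))
    (hindep : iIndepFun X μ)
    (hunif : ∀ i, μ.map (X i) = Measure.pi fun _ : κ => volume.restrict (Set.Icc 0 1)) :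
    ∀ᵐ ω ∂μ, ∀ i i', i ≠ i' → ∀ j j', X i ω j ≠ X i' ω j' := by
  refine ae_all_iff.2 fun i => ae_all_iff.2 fun i' => ?_
  by_cases hii' : i = i'
  · exact ae_of_all _ fun ω h => absurd hii' h
  have hcoord : ∀ j j', ∀ᵐ ω ∂μ, X i ω j ≠ X i' ω j' := fun j j' => by
    have : NullSingletonClass (μ.map fun ω => X i ω j) := by
      rw [show (fun ω => X i ω j) = Function.eval j ∘ X i from rfl,
        ← Measure.map_map (measurable_pi_apply j) (hmeas i), hunif i,
        (measurePreserving_eval _ j).map_eq]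
      infer_instance
    exact ((hindep.indepFun hii').comp (measurable_pi_apply j) (measurable_pi_apply j')).ae_ne
      ((measurable_pi_apply j).comp (hmeas i)) ((measurable_pi_apply j').comp (hmeas i'))
  filter_upwards [ae_all_iff.2 fun j => ae_all_iff.2 (hcoord j)] with ω h _ using h

end UniformSample

theorem ae_isKPNN_iff {Ω : Type*} [MeasurableSpace Ω] {μ : Measure Ω} [IsProbabilityMeasure μ]
    {s d k : ℕ} {X : Fin s → Ω → Fin d → ℝ}
    (hmeas : ∀ i, Measurable (X i)) (hindep : iIndepFun X μ)
    (hunif : ∀ i, μ.map (X i) = Measure.pi fun _ : Fin d => volume.restrict (Set.Icc 0 1))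
    (hk : 1 ≤ k) (hks : k ≤ s) (i0 : Fin s) :
    ∀ᵐ ω ∂μ, isKPNN k 0 (fun i => X i ω) i0 ↔ #{i ∈ {i0}ᶜ | X i ω ≤ X i0 ω} ≤ 2 * k - 2 := by
  filter_upwards [ae_forall_mem_Icc_of_map_eq hmeas hunif,
    ae_forall_ne_of_iIndepFun hmeas hindep hunif] with ω hω hgen
  exact isKPNN_iff_card_filter_le (fun i => (hω i).1) hgen hk hks

theorem kPNN_conditional_probability_general
    {Ω : Type*} [MeasurableSpace Ω]
    (μ : Measure Ω) [IsProbabilityMeasure μ]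
    (d k s : ℕ) (hk : 1 ≤ k) (hks : k ≤ s)
    (X : Fin s → Ω → (Fin d → ℝ)) (hmeas : ∀ i, Measurable (X i))
    (hindep : iIndepFun X μ)
    (hunif : ∀ i, Measure.map (X i) μ =
      Measure.pi (fun _ : Fin d => (volume : Measure ℝ).restrict (Set.Icc 0 1)))
    (i0 : Fin s)
    (P1 : Ω → ℝ)
    (hP1 : P1 = fun ω => if isKPNN k 0 (fun i => X i ω) i0 then (1 : ℝ) else 0) :
    μ[P1 | MeasurableSpace.comap (X i0) inferInstance]
      =ᵐ[μ] fun ω => binomCDF (s - 1) (∏ j, X i0 ω j) (2 * k - 2) := by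
  subst hP1
  set T : Finset (Fin s) := {i0}ᶜ
  set Z : Ω → T → Fin d → ℝ := fun ω i => X i ω
  have hZ : Measurable Z := measurable_pi_lambda _ fun i => hmeas i
  set A : Set ((Fin d → ℝ) × (T → Fin d → ℝ)) := {q | #{i | q.2 i ≤ q.1} ≤ 2 * k - 2}
  have hA : MeasurableSet A := measurable_card_filter (fun i => measurableSet_le
    ((measurable_pi_apply i).comp measurable_snd) measurable_fst) measurableSet_Iic
  have hP1 : (fun ω => if isKPNN k 0 (fun i => X i ω) i0 then (1 : ℝ) else 0) =ᵐ[μ]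
      fun ω => A.indicator 1 (X i0 ω, Z ω) := by
    filter_upwards [ae_isKPNN_iff hmeas hindep hunif hk hks i0] with ω h
    rw [Set.indicator_apply]
    congr 1
    rw [h, ← card_filter_univ_coe]
    rfl
  filter_upwards [condExp_congr_ae hP1,
    (hindep.indepFun_compl_singleton hmeas i0).condExp_ae_eq_integral_map (hmeas i0) hZ
      (f := A.indicator 1) (measurable_one.indicator hA).stronglyMeasurable
      ((integrable_const (1 : ℝ)).indicator (hA.preimage ((hmeas i0).prodMk hZ))),
    ae_forall_mem_Icc_of_map_eq hmeas hunif] with ω h1 h2 hω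
  refine h1.trans (h2.trans ?_)
  change ∫ z, (Prod.mk (X i0 ω) ⁻¹' A).indicator 1 z ∂_ = _
  rw [integral_indicator_one (hA.preimage measurable_prodMk_left),
    hindep.map_restrict_eq_pi hmeas hunif T]
  refine (measureReal_pi_card_filter_le_le (hω i0) _).trans ?_
  rw [Fintype.card_coe, card_compl, card_singleton, Fintype.card_fin]

/-- For i.i.d. uniform points on `[0,1]^d`, the conditional probability
given `X_1` that `X_1` is a `k`-PNN of the origin equals the `Binomial(s−1, ∏_j X_{1j})`
CDF at `2k − 2`, almost surely. -/
theorem kPNN_conditional_probability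
    {Ω : Type*} [MeasurableSpace Ω]
    (μ : Measure Ω) [IsProbabilityMeasure μ]
    (d k s : ℕ) (hd : 1 ≤ d) (hk : 1 ≤ k) (hks : k ≤ s)
    (X : Fin s → Ω → (Fin d → ℝ)) (hmeas : ∀ i, Measurable (X i))
    (hindep : iIndepFun X μ)
    (hunif : ∀ i, Measure.map (X i) μ =
      Measure.pi (fun _ : Fin d => (volume : Measure ℝ).restrict (Set.Icc 0 1)))
    (i0 : Fin s) (hi0 : (i0 : ℕ) = 0)
    (P1 : Ω → ℝ)
    (hP1 : P1 = fun ω => if isKPNN k 0 (fun i => X i ω) i0 then (1 : ℝ) else 0) :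
    μ[P1 | MeasurableSpace.comap (X i0) inferInstance]
      =ᵐ[μ] fun ω => binomCDF (s - 1) (∏ j, X i0 ω j) (2 * k - 2) :=
  kPNN_conditional_probability_general μ d k s hk hks X hmeas hindep hunif i0 P1 hP1
end

section
/- Fix integers d, k ≥ 1. Let U = (U_1, ..., U_d) be uniformly distributed on [0,1]^d, and for each integer s ≥ 2 define q_s(U) = F_{s−1, p}(2k−2) at p = ∏_{j=1}^d U_j, where F_{m,p}(r) = P(Binomial(m,p) ≤ r) is the Binomial cumulative distribution function. Then limsup_{s→∞} [ (d−1)! · s / (2k · (log s)^d) ] · P( q_s(U) ≥ 1/s² ) ≤ 1. -/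
open MeasureTheory Finset

/-!
Put `t_s = (log (2k - 1) + 2k log s) / (s - 2k + 1) ≈ 2k log s / s`. Bounding every term of the
lower tail by its largest factors, `F_{s-1,p}(2k-2) ≤ (2k - 1) s^(2k-2) e^(-p (s-2k+1))`, which is
below `1/s²` as soon as `p > t_s`; so on the cube `q_s(U) ≥ 1/s²` forces `∏ U_j ≤ t_s`.
Conditioning on one coordinate and integrating gives, by induction on `d`,
`P(∏_{j<d} U_j ≤ t) ≤ t ∑_{i<d} log(1/t)^i / i!`, and at `t = t_s` the last term dominates:
the bound is `(1 + o(1)) t_s (log s)^(d-1) / (d-1)! = (1 + o(1)) 2k (log s)^d / ((d-1)! s)`.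
-/

open Filter Topology

/-- `P(U₁ ⋯ U_d ≤ t)` for independent uniform `U_j` on `[0, 1]` and `0 < t < 1`. -/
noncomputable def prodUniformCDF (d : ℕ) (t : ℝ) : ℝ :=
  t * ∑ i ∈ range d, (-Real.log t) ^ i / i.factorial

noncomputable abbrev unitCubeMeasure (d : ℕ) : Measure (Fin d → ℝ) :=
  Measure.pi fun _ => volume.restrict (Set.Icc 0 1)

theorem prodUniformCDF_nonneg (d : ℕ) {t : ℝ} (ht0 : 0 < t) (ht1 : t ≤ 1) :
    0 ≤ prodUniformCDF d t := by
  have : 0 ≤ -Real.log t := neg_nonneg.2 (Real.log_nonpos ht0.le ht1)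
  unfold prodUniformCDF
  positivity

theorem continuousOn_prodUniformCDF (d : ℕ) : ContinuousOn (prodUniformCDF d) (Set.Ioi 0) :=
  continuousOn_id.mul <| continuousOn_finsetSum _ fun i _ =>
    ((Real.continuousOn_log.mono fun _ hx => ne_of_gt hx).neg.pow i).div_const _

theorem continuousOn_prodUniformCDF_div (d : ℕ) {t : ℝ} (ht0 : 0 < t) :
    ContinuousOn (fun u => prodUniformCDF d (t / u)) (Set.Ioi 0) :=
  (continuousOn_prodUniformCDF d).comp (continuousOn_const.div continuousOn_id fun _ hu => hu.ne')
    fun _ hu => div_pos ht0 hu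

theorem hasDerivAt_mul_log_sub_pow_div_factorial {t u : ℝ} (hu : u ≠ 0) (i : ℕ) :
    HasDerivAt (fun u => t * (Real.log u - Real.log t) ^ (i + 1) / (i + 1).factorial)
      (t / u * (Real.log u - Real.log t) ^ i / i.factorial) u := by
  refine (((((Real.hasDerivAt_log hu).sub_const (Real.log t)).pow (i + 1)).const_mul t).div_const
    ((i + 1).factorial : ℝ)).congr_deriv ?_
  rw [Nat.factorial_succ, Nat.add_sub_cancel]
  push_cast
  field_simp

theorem integral_prodUniformCDF_div (d : ℕ) {t : ℝ} (ht0 : 0 < t) (ht1 : t ≤ 1) :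
    t + ∫ u in t..1, prodUniformCDF d (t / u) = prodUniformCDF (d + 1) t := by
  have hpos : ∀ u ∈ Set.uIcc t 1, 0 < u := fun u hu =>
    ht0.trans_le (Set.uIcc_of_le ht1 ▸ hu).1
  have hderiv : ∀ u ∈ Set.uIcc t 1, HasDerivAt
      (fun u => ∑ i ∈ range d, t * (Real.log u - Real.log t) ^ (i + 1) / (i + 1).factorial)
      (prodUniformCDF d (t / u)) u := by
    intro u hu
    have hu0 := hpos u hu
    refine (HasDerivAt.fun_sum fun i _ =>
      hasDerivAt_mul_log_sub_pow_div_factorial hu0.ne' i).congr_deriv ?_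
    simp only [prodUniformCDF, Finset.mul_sum, Real.log_div ht0.ne' hu0.ne', neg_sub,
      mul_div_assoc]
  have hcont := (continuousOn_prodUniformCDF_div d ht0).mono hpos
  rw [intervalIntegral.integral_eq_sub_of_hasDerivAt hderiv hcont.intervalIntegrable,
    prodUniformCDF, sum_range_succ', mul_add, Finset.mul_sum]
  simp [mul_div_assoc, add_comm]

instance (d : ℕ) : IsProbabilityMeasure (unitCubeMeasure d) :=
  have : IsProbabilityMeasure (volume.restrict (Set.Icc (0 : ℝ) 1)) := ⟨by simp⟩
  inferInstance

theorem MeasureTheory.Measure.pi_setOf_prod_le_eq_lintegral (μ : Measure ℝ) [SigmaFinite μ]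
    (d : ℕ) (t : ℝ) :
    Measure.pi (fun _ : Fin (d + 1) => μ) {u | ∏ j, u j ≤ t}
      = ∫⁻ x, Measure.pi (fun _ : Fin d => μ) {v | x * ∏ j, v j ≤ t} ∂μ := by
  set S := {w : ℝ × (Fin d → ℝ) | w.1 * ∏ j, w.2 j ≤ t}
  have hS : MeasurableSet S := measurableSet_le (by fun_prop) measurable_const
  calc Measure.pi (fun _ : Fin (d + 1) => μ) {u | ∏ j, u j ≤ t}
      = Measure.pi (fun _ : Fin (d + 1) => μ)
          (MeasurableEquiv.piFinSuccAbove (fun _ => ℝ) 0 ⁻¹' S) := by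
        congr 1
        ext u
        simp [S, Fin.prod_univ_succ, Fin.insertNthEquiv, Fin.tail]
    _ = (μ.prod (Measure.pi fun _ : Fin d => μ)) S :=
        (measurePreserving_piFinSuccAbove (fun _ : Fin (d + 1) => μ) 0).measure_preimage
          hS.nullMeasurableSet
    _ = _ := Measure.prod_apply hS

theorem lintegral_ofReal_prodUniformCDF_div (d : ℕ) {t : ℝ} (ht0 : 0 < t) (ht1 : t ≤ 1) :
    ∫⁻ u in Set.Ioc t 1, ENNReal.ofReal (prodUniformCDF d (t / u))
      = ENNReal.ofReal (∫ u in t..1, prodUniformCDF d (t / u)) := by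
  have hcont := (continuousOn_prodUniformCDF_div d ht0).mono fun u (hu : u ∈ Set.Icc t 1) =>
    ht0.trans_le hu.1
  rw [intervalIntegral.integral_of_le ht1, ofReal_integral_eq_lintegral_ofReal
    (hcont.integrableOn_Icc.mono_set Set.Ioc_subset_Icc_self)]
  filter_upwards [ae_restrict_mem measurableSet_Ioc] with u hu
  have hu0 : 0 < u := ht0.trans hu.1
  exact prodUniformCDF_nonneg d (div_pos ht0 hu0) ((div_le_one hu0).2 hu.1.le)

theorem unitCubeMeasure_setOf_prod_le (d : ℕ) {t : ℝ} (ht0 : 0 < t) (ht1 : t < 1) :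
    unitCubeMeasure d {u | ∏ j, u j ≤ t} ≤ ENNReal.ofReal (prodUniformCDF d t) := by
  induction d generalizing t with
  | zero => simp [ht1.not_ge]
  | succ d ih =>
    have hI := integral_prodUniformCDF_div d ht0 ht1.le
    have hI0 : 0 ≤ ∫ u in t..1, prodUniformCDF d (t / u) :=
      intervalIntegral.integral_nonneg ht1.le fun u hu =>
        have hu0 : 0 < u := ht0.trans_le hu.1
        prodUniformCDF_nonneg d (div_pos ht0 hu0) ((div_le_one hu0).2 hu.1)
    calc unitCubeMeasure (d + 1) {u | ∏ j, u j ≤ t}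
        = ∫⁻ x in Set.Icc 0 t ∪ Set.Ioc t 1,
            unitCubeMeasure d {v | x * ∏ j, v j ≤ t} := by
          rw [Set.Icc_union_Ioc_eq_Icc ht0.le ht1.le]
          exact Measure.pi_setOf_prod_le_eq_lintegral _ d t
      _ ≤ (∫⁻ x in Set.Icc 0 t, 1)
            + ∫⁻ x in Set.Ioc t 1, ENNReal.ofReal (prodUniformCDF d (t / x)) := by
          rw [lintegral_union measurableSet_Ioc
            ((Set.Iic_disjoint_Ioc le_rfl).mono_left Set.Icc_subset_Iic_self)]
          refine add_le_add (lintegral_mono fun _ => prob_le_one)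
            (setLIntegral_mono' measurableSet_Ioc fun x hx => ?_)
          have hx0 : 0 < x := ht0.trans hx.1
          have hset : {v : Fin d → ℝ | x * ∏ j, v j ≤ t} = {v | ∏ j, v j ≤ t / x} := by
            ext v
            simp [le_div_iff₀ hx0, mul_comm]
          rw [hset]
          exact ih (div_pos ht0 hx0) ((div_lt_one hx0).2 hx.1)
      _ = ENNReal.ofReal (prodUniformCDF (d + 1) t) := by
          rw [lintegral_ofReal_prodUniformCDF_div d ht0 ht1.le, setLIntegral_const, one_mul,
            Real.volume_Icc, sub_zero, ← ENNReal.ofReal_add ht0.le hI0, hI]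

theorem pow_div_factorial_le_pow_div_factorial {x : ℝ} {i j : ℕ} (hij : i ≤ j)
    (hjx : (j : ℝ) ≤ x) :
    x ^ i / i.factorial ≤ x ^ j / j.factorial := by
  induction j, hij using Nat.le_induction with
  | base => rfl
  | succ j hij ih =>
    have hx : (j : ℝ) + 1 ≤ x := by exact_mod_cast hjx
    have hx0 : 0 ≤ x := by linarith [(j.cast_nonneg : (0 : ℝ) ≤ j)]
    calc x ^ i / i.factorial ≤ x ^ j / j.factorial := ih (by linarith)
      _ ≤ x ^ j / j.factorial * (x / (j + 1)) :=
        le_mul_of_one_le_right (by positivity) ((one_le_div (by positivity)).2 hx)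
      _ = x ^ (j + 1) / (j + 1).factorial := by
        rw [Nat.factorial_succ]
        push_cast
        field_simp
        ring

theorem sum_range_succ_pow_div_factorial_le {x : ℝ} (e : ℕ) (hx : (e : ℝ) ≤ x) :
    ∑ i ∈ range (e + 1), x ^ i / i.factorial ≤ x ^ e / e.factorial * (1 + e ^ 2 / x) := by
  rcases e with _ | f
  · simp
  have hx0 : 0 < x := lt_of_lt_of_le (by positivity) hx
  have hf : (f : ℝ) ≤ x := by push_cast at hx; linarith
  have hhead :
      ∑ i ∈ range (f + 1), x ^ i / i.factorial ≤ (f + 1) * (x ^ f / f.factorial) := by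
    calc _ ≤ ∑ _i ∈ range (f + 1), x ^ f / f.factorial :=
          sum_le_sum fun i hi =>
            pow_div_factorial_le_pow_div_factorial (Nat.lt_succ_iff.1 (mem_range.1 hi)) hf
      _ = (f + 1) * (x ^ f / f.factorial) := by simp
  have hlast : (f + 1) * (x ^ f / f.factorial)
      = x ^ (f + 1) / (f + 1).factorial * ((f + 1 : ℕ) ^ 2 / x) := by
    rw [Nat.factorial_succ]
    push_cast
    field_simp
    ring
  rw [sum_range_succ, mul_one_add, ← hlast]
  linarith

theorem prodUniformCDF_succ_le {t : ℝ} (ht0 : 0 < t) (e : ℕ) (he : (e : ℝ) ≤ -Real.log t) :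
    prodUniformCDF (e + 1) t
      ≤ t * ((-Real.log t) ^ e / e.factorial * (1 + e ^ 2 / -Real.log t)) :=
  mul_le_mul_of_nonneg_left (sum_range_succ_pow_div_factorial_le e he) ht0.le

theorem binomCDF_le_exp {n : ℕ} (hn : 1 ≤ n) (r : ℕ) {p : ℝ} (hp0 : 0 ≤ p)
    (hp1 : p ≤ 1) :
    binomCDF n p r ≤ (r + 1) * n ^ r * Real.exp (-(p * (n - r : ℕ))) := by
  have hterm : ∀ j ∈ range (r + 1), (n.choose j : ℝ) * p ^ j * (1 - p) ^ (n - j)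
      ≤ n ^ r * Real.exp (-(p * (n - r : ℕ))) := by
    intro j hj
    have hjr : j ≤ r := Nat.lt_succ_iff.1 (mem_range.1 hj)
    have hchoose : (n.choose j : ℝ) ≤ n ^ r :=
      (Nat.cast_le.2 (n.choose_le_pow j)).trans_eq (Nat.cast_pow n j) |>.trans
        (pow_le_pow_right₀ (by exact_mod_cast hn) hjr)
    have hexp : (1 - p) ^ (n - j) ≤ Real.exp (-(p * (n - r : ℕ))) :=
      calc (1 - p) ^ (n - j) ≤ (1 - p) ^ (n - r) :=
            pow_le_pow_of_le_one (by linarith) (by linarith) (by omega)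
        _ ≤ Real.exp (-p) ^ (n - r) :=
            pow_le_pow_left₀ (by linarith) (by linarith [Real.add_one_le_exp (-p)]) _
        _ = Real.exp (-(p * (n - r : ℕ))) := by rw [← Real.exp_nat_mul]; ring_nf
    calc (n.choose j : ℝ) * p ^ j * (1 - p) ^ (n - j)
        ≤ n ^ r * 1 * Real.exp (-(p * (n - r : ℕ))) := by
          gcongr
          · exact pow_le_one₀ hp0 hp1
      _ = n ^ r * Real.exp (-(p * (n - r : ℕ))) := by ring
  calc binomCDF n p r ≤ ∑ _j ∈ range (r + 1), n ^ r * Real.exp (-(p * (n - r : ℕ))) :=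
        sum_le_sum hterm
    _ = (r + 1) * n ^ r * Real.exp (-(p * (n - r : ℕ))) := by
        rw [sum_const, card_range, nsmul_eq_mul]
        push_cast
        ring

/-- The `p` at which `(2k - 1) s^(2k-2) e^(-p (s-2k+1)) = 1 / s²`. -/
noncomputable def binomTailThreshold (k s : ℕ) : ℝ :=
  (Real.log (2 * k - 1) + 2 * k * Real.log s) / (s - 2 * k + 1)

theorem binomTailThreshold_pos {k s : ℕ} (hk : 1 ≤ k) (hs : 2 * k ≤ s) :
    0 < binomTailThreshold k s := by
  have hk' : (1 : ℝ) ≤ k := by exact_mod_cast hk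
  have hs' : (2 * k : ℝ) ≤ s := by exact_mod_cast hs
  have hlog : 0 < Real.log s := Real.log_pos (by linarith)
  have : 0 ≤ Real.log (2 * k - 1) := Real.log_nonneg (by linarith)
  unfold binomTailThreshold
  apply div_pos <;> nlinarith

theorem binomCDF_lt_inv_sq {k s : ℕ} (hk : 1 ≤ k) (hs : 2 * k ≤ s) {p : ℝ} (hp1 : p ≤ 1)
    (hp : binomTailThreshold k s < p) : binomCDF (s - 1) p (2 * k - 2) < 1 / s ^ 2 := by
  set t := binomTailThreshold k s
  have ht := binomTailThreshold_pos hk hs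
  have hs' : (2 * k : ℝ) ≤ s := by exact_mod_cast hs
  have hk' : (1 : ℝ) ≤ k := by exact_mod_cast hk
  have hs0 : (0 : ℝ) < s := by linarith
  have hr : ((2 * k - 2 : ℕ) : ℝ) + 1 = 2 * k - 1 := by
    rw [Nat.cast_sub (by omega)]
    push_cast
    ring
  have hm : ((s - 1 - (2 * k - 2) : ℕ) : ℝ) = s - 2 * k + 1 := by
    rw [show s - 1 - (2 * k - 2) = s + 1 - 2 * k by omega, Nat.cast_sub (by omega)]
    push_cast
    ring
  have hm0 : (0 : ℝ) < s - 2 * k + 1 := by linarith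
  have h2k : (0 : ℝ) < 2 * k - 1 := by linarith
  have hexp : Real.exp (-(t * (s - 2 * k + 1)))
      = 1 / ((2 * k - 1) * s ^ (2 * k - 2) * s ^ 2) := by
    have hlog : t * (s - 2 * k + 1) = Real.log ((2 * k - 1) * s ^ (2 * k)) := by
      rw [Real.log_mul h2k.ne' (by positivity), Real.log_pow]
      simp only [t, binomTailThreshold, div_mul_cancel₀ _ hm0.ne']
      push_cast
      ring
    rw [hlog, Real.exp_neg, Real.exp_log (by positivity), mul_assoc, ← pow_add,
      show 2 * k - 2 + 2 = 2 * k by omega, one_div]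
  calc binomCDF (s - 1) p (2 * k - 2)
      ≤ (2 * k - 1) * ((s - 1 : ℕ) : ℝ) ^ (2 * k - 2)
          * Real.exp (-(p * (s - 2 * k + 1))) := by
        rw [← hr, ← hm]
        exact binomCDF_le_exp (by omega) _ (ht.trans hp).le hp1
    _ ≤ (2 * k - 1) * (s : ℝ) ^ (2 * k - 2) * Real.exp (-(p * (s - 2 * k + 1))) := by
        gcongr
        exact_mod_cast Nat.sub_le s 1
    _ < (2 * k - 1) * (s : ℝ) ^ (2 * k - 2) * Real.exp (-(t * (s - 2 * k + 1))) := by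
        gcongr
    _ = 1 / s ^ 2 := by
        rw [hexp]
        field_simp

theorem tendsto_log_natCast_atTop : Tendsto (fun s : ℕ => Real.log s) atTop atTop :=
  Real.tendsto_log_atTop.comp tendsto_natCast_atTop_atTop

theorem tendsto_mul_binomTailThreshold_div_log (k : ℕ) (hk : 1 ≤ k) :
    Tendsto (fun s : ℕ => s * binomTailThreshold k s / (2 * k * Real.log s)) atTop (𝓝 1) := by
  have hk0 : (0 : ℝ) < 2 * k := by positivity
  have hfactor : Tendsto (fun s : ℕ => (Real.log (2 * k - 1) / (2 * k * Real.log s) + 1)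
      * (s / (s + (1 - 2 * k)))) atTop (𝓝 ((0 + 1) * 1)) :=
    ((tendsto_const_nhds.div_atTop (tendsto_log_natCast_atTop.const_mul_atTop hk0)).add_const
      1).mul (tendsto_natCast_div_add_atTop _)
  rw [zero_add, one_mul] at hfactor
  refine hfactor.congr' ?_
  filter_upwards [tendsto_log_natCast_atTop.eventually_gt_atTop 0, eventually_ge_atTop (2 * k)]
    with s hL hs
  have hs' : (2 * k : ℝ) ≤ s := by exact_mod_cast hs
  rw [binomTailThreshold]
  field_simp
  ring

theorem tendsto_binomTailThreshold (k : ℕ) (hk : 1 ≤ k) :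
    Tendsto (binomTailThreshold k) atTop (𝓝[>] 0) := by
  have hlog : Tendsto (fun s : ℕ => Real.log s / s) atTop (𝓝 0) :=
    Real.isLittleO_log_id_atTop.tendsto_div_nhds_zero.comp tendsto_natCast_atTop_atTop
  have hprod := ((tendsto_mul_binomTailThreshold_div_log k hk).mul_const (2 * k : ℝ)).mul hlog
  rw [mul_zero] at hprod
  refine tendsto_nhdsWithin_iff.2 ⟨hprod.congr' ?_, ?_⟩
  · filter_upwards [tendsto_log_natCast_atTop.eventually_gt_atTop 0, eventually_gt_atTop 0]
      with s hL hs
    have : (s : ℝ) ≠ 0 := by positivity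
    field_simp
  · filter_upwards [eventually_ge_atTop (2 * k)] with s hs
    exact binomTailThreshold_pos hk hs

theorem tendsto_neg_log_binomTailThreshold (k : ℕ) (hk : 1 ≤ k) :
    Tendsto (fun s => -Real.log (binomTailThreshold k s)) atTop atTop :=
  tendsto_neg_atBot_atTop.comp <|
    Real.tendsto_log_nhdsGT_zero.comp (tendsto_binomTailThreshold k hk)

theorem neg_log_binomTailThreshold_le {k s : ℕ} (hk : 1 ≤ k) (hs : 2 * k ≤ s)
    (hL : 1 ≤ Real.log s) : -Real.log (binomTailThreshold k s) ≤ Real.log s := by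
  have ht := binomTailThreshold_pos hk hs
  have hk' : (1 : ℝ) ≤ k := by exact_mod_cast hk
  have hs' : (2 * k : ℝ) ≤ s := by exact_mod_cast hs
  have hc : 0 ≤ Real.log (2 * k - 1) := Real.log_nonneg (by linarith)
  have hnum : binomTailThreshold k s * (s - 2 * k + 1)
      = Real.log (2 * k - 1) + 2 * k * Real.log s :=
    div_mul_cancel₀ _ (by linarith)
  have hst : 1 ≤ s * binomTailThreshold k s := by nlinarith
  have hs0 : (0 : ℝ) < s := by linarith
  rw [← Real.log_inv, ← sub_nonneg, ← Real.log_div hs0.ne' (inv_pos.2 ht).ne', div_inv_eq_mul]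
  exact Real.log_nonneg hst

theorem ae_unitCubeMeasure_mem_Icc (d : ℕ) :
    ∀ᵐ u ∂unitCubeMeasure d, ∀ j, u j ∈ Set.Icc 0 1 :=
  ae_all_iff.2 fun _ => Measure.tendsto_eval_ae_ae.eventually (ae_restrict_mem measurableSet_Icc)

theorem unitCubeMeasure_binomCDF_ge_le (d : ℕ) {k s : ℕ} (hk : 1 ≤ k) (hs : 2 * k ≤ s)
    (ht : binomTailThreshold k s < 1) :
    unitCubeMeasure d {u | binomCDF (s - 1) (∏ j, u j) (2 * k - 2) ≥ 1 / (s : ℝ) ^ 2}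
      ≤ ENNReal.ofReal (prodUniformCDF d (binomTailThreshold k s)) := by
  refine (measure_mono_ae ?_).trans
    (unitCubeMeasure_setOf_prod_le d (binomTailThreshold_pos hk hs) ht)
  filter_upwards [ae_unitCubeMeasure_mem_Icc d] with u hu hq
  by_contra hlt
  exact (binomCDF_lt_inv_sq hk hs (prod_le_one (fun j _ => (hu j).1) fun j _ => (hu j).2)
    (not_le.1 hlt)).not_ge hq

theorem eventually_mul_unitCubeMeasure_binomCDF_ge_le (e k : ℕ) (hk : 1 ≤ k) :
    ∀ᶠ s : ℕ in atTop, (e.factorial : ℝ) * s / (2 * k * Real.log s ^ (e + 1)) *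
        (unitCubeMeasure (e + 1)
          {u | binomCDF (s - 1) (∏ j, u j) (2 * k - 2) ≥ 1 / (s : ℝ) ^ 2}).toReal
      ≤ s * binomTailThreshold k s / (2 * k * Real.log s) *
        (1 + e ^ 2 / -Real.log (binomTailThreshold k s)) := by
  filter_upwards [eventually_ge_atTop (2 * k), tendsto_log_natCast_atTop.eventually_ge_atTop 1,
    ((tendsto_binomTailThreshold k hk).mono_right nhdsWithin_le_nhds).eventually_lt_const one_pos,
    (tendsto_neg_log_binomTailThreshold k hk).eventually_ge_atTop (e : ℝ)] with s hs hL ht1 hX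
  set t := binomTailThreshold k s
  set L := Real.log s
  set X := -Real.log t
  have hXL : X ≤ L := neg_log_binomTailThreshold_le hk hs hL
  have hX0 : 0 ≤ X := e.cast_nonneg.trans hX
  have hP : (unitCubeMeasure (e + 1)
        {u | binomCDF (s - 1) (∏ j, u j) (2 * k - 2) ≥ 1 / (s : ℝ) ^ 2}).toReal
      ≤ t * (X ^ e / e.factorial * (1 + e ^ 2 / X)) :=
    ENNReal.toReal_le_of_le_ofReal (by have := binomTailThreshold_pos hk hs; positivity)
      ((unitCubeMeasure_binomCDF_ge_le _ hk hs ht1).trans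
        (ENNReal.ofReal_le_ofReal (prodUniformCDF_succ_le (binomTailThreshold_pos hk hs) e hX)))
  calc (e.factorial : ℝ) * s / (2 * k * L ^ (e + 1)) * _
      ≤ e.factorial * s / (2 * k * L ^ (e + 1))
          * (t * (X ^ e / e.factorial * (1 + e ^ 2 / X))) := by
        gcongr
    _ ≤ e.factorial * s / (2 * k * L ^ (e + 1))
          * (t * (L ^ e / e.factorial * (1 + e ^ 2 / X))) := by
        have := binomTailThreshold_pos hk hs
        gcongr
    _ = s * t / (2 * k * L) * (1 + e ^ 2 / X) := by
        field_simp
        ring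

/-- For `U` uniform on `[0,1]^d` and
`q_s(U) = P(Binomial(s−1, ∏_j U_j) ≤ 2k−2)`, the tail bound
`limsup_s [ (d−1)!·s / (2k (log s)^d) ] · P(q_s(U) ≥ 1/s²) ≤ 1` holds. -/
theorem kPNN_origin_tail_bound
    (d k : ℕ) (hd : 1 ≤ d) (hk : 1 ≤ k)
    (π : Measure (Fin d → ℝ))
    (hπ : π = Measure.pi (fun _ : Fin d => (volume : Measure ℝ).restrict (Set.Icc 0 1)))
    (q : ℕ → (Fin d → ℝ) → ℝ)
    (hq : q = fun s u => binomCDF (s - 1) (∏ j, u j) (2 * k - 2)) :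
    Filter.limsup (fun s : ℕ =>
        ((d - 1).factorial : ℝ) * s / (2 * k * (Real.log s) ^ d) *
          (π {u | q s u ≥ 1 / (s : ℝ) ^ 2}).toReal)
      Filter.atTop ≤ 1 := by
  subst hπ hq
  obtain ⟨e, rfl⟩ : ∃ e, d = e + 1 := ⟨d - 1, by omega⟩
  have hbound : Tendsto (fun s : ℕ => s * binomTailThreshold k s / (2 * k * Real.log s) *
      (1 + e ^ 2 / -Real.log (binomTailThreshold k s))) atTop (𝓝 (1 * (1 + 0))) :=
    (tendsto_mul_binomTailThreshold_div_log k hk).mul <|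
      (tendsto_const_nhds.div_atTop (tendsto_neg_log_binomTailThreshold k hk)).const_add 1
  rw [add_zero, one_mul] at hbound
  calc _ ≤ _ := limsup_le_limsup (eventually_mul_unitCubeMeasure_binomCDF_ge_le e k hk)
        (isCoboundedUnder_le_of_le _ fun s => by positivity) hbound.isBoundedUnder_le
    _ = 1 := hbound.limsup_eq
end

section
/- Let s ≥ 1, let Z_i = (X_i, Y_i), i = 1,...,s, be i.i.d. random pairs with Y_i integrable, and let ξ be a random variable independent of (Z_1,...,Z_s). Let S_1, ..., S_s be measurable functions of (ξ, X_1, ..., X_s) only (honesty: the weights do not depend on the responses), with |S_i| ≤ 1 almost surely, and set T = Σ_{i=1}^s S_i Y_i. Then, almost surely, E[T | X_1, Y_1] − E[T | X_1] = E[S_1 | X_1] · ( Y_1 − E[Y_1 | X_1] ). -/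
/-!
Put `W = (ξ, (Z_j)_{j ≠ i₀})`. Since `ξ` is independent of the sample and the `Z_j` are
independent, `Z_{i₀} = (X_{i₀}, Y_{i₀})` is independent of `W`. Honesty makes `S_{i₀}` and
`H = ∑_{j ≠ i₀} S_j Y_j` functions of `(X_{i₀}, W)`, and conditioning such a function on
`Z_{i₀}` just integrates `W` out, so the result only depends on `X_{i₀}`:
`E[· | Z_{i₀}] = E[· | X_{i₀}]`. Hence
`E[T | Z_{i₀}] = Y_{i₀} E[S_{i₀} | X_{i₀}] + E[H | X_{i₀}]`, and conditioning once more on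
`X_{i₀}` gives `E[T | X_{i₀}]`; the `E[H | X_{i₀}]` terms cancel.
-/

open MeasureTheory ProbabilityTheory Finset

namespace ProbabilityTheory

variable {Ω α β γ : Type*} {mΩ : MeasurableSpace Ω} [MeasurableSpace α] [MeasurableSpace β]
  [MeasurableSpace γ] {μ : Measure Ω}

theorem IndepFun.indepFun_prodMk_of_indepFun [IsFiniteMeasure μ] {A : Ω → α} {B : Ω → β}
    {C : Ω → γ} (hA : Measurable A) (hB : Measurable B) (hC : Measurable C)
    (hBC : IndepFun B C μ) (hA_BC : IndepFun A (fun ω => (B ω, C ω)) μ) :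
    IndepFun B (fun ω => (A ω, C ω)) μ := by
  have hAC : IndepFun A C μ := hA_BC.comp measurable_id measurable_snd
  rw [indepFun_iff_map_prod_eq_prod_map_map hB.aemeasurable (hA.prodMk hC).aemeasurable]
  refine Measure.ext_prod₃ fun {s t u} hs ht hu => ?_
  rw [Measure.map_apply (hB.prodMk (hA.prodMk hC)) (hs.prod (ht.prod hu)),
    Measure.prod_prod, Measure.map_apply hB hs, Measure.map_apply (hA.prodMk hC) (ht.prod hu)]
  have hpre : (fun ω => (B ω, A ω, C ω)) ⁻¹' s ×ˢ t ×ˢ u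
      = A ⁻¹' t ∩ (fun ω => (B ω, C ω)) ⁻¹' s ×ˢ u := by
    ext ω; simp only [Set.mem_preimage, Set.mem_prod, Set.mem_inter_iff]; tauto
  rw [hpre, hA_BC.measure_inter_preimage_eq_mul _ _ ht (hs.prod hu)]
  change μ (A ⁻¹' t) * μ (B ⁻¹' s ∩ C ⁻¹' u)
    = μ (B ⁻¹' s) * μ (A ⁻¹' t ∩ C ⁻¹' u)
  rw [hBC.measure_inter_preimage_eq_mul _ _ hs hu, hAC.measure_inter_preimage_eq_mul _ _ ht hu]
  ring

theorem iIndepFun.indepFun_prodMk_compl [IsFiniteMeasure μ] {ι : Type*} [Fintype ι]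
    [DecidableEq ι] {Z : ι → Ω → β} (hZ : ∀ i, Measurable (Z i)) (hindep : iIndepFun Z μ)
    {ξ : Ω → γ} (hξ : Measurable ξ) (hξZ : IndepFun ξ (fun ω i => Z i ω) μ) (i0 : ι) :
    IndepFun (Z i0) (fun ω => (ξ ω, fun j : ({i0}ᶜ : Finset ι) => Z j ω)) μ := by
  refine IndepFun.indepFun_prodMk_of_indepFun hξ (hZ i0) (measurable_pi_lambda _ fun j => hZ j)
    ((hindep.indepFun_finset {i0} {i0}ᶜ disjoint_compl_right hZ).comp
      (measurable_pi_apply (⟨i0, mem_singleton_self i0⟩ : ({i0} : Finset ι)))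
      measurable_id) ?_
  exact hξZ.comp measurable_id
    ((measurable_pi_apply i0).prodMk (measurable_pi_lambda _ fun j => measurable_pi_apply _))

theorem IndepFun.condExp_comap_ae_eq_integral_map [IsFiniteMeasure μ] {V : Ω → β} {W : Ω → γ}
    (hV : Measurable V) (hW : Measurable W) (hVW : IndepFun V W μ) {f : β × γ → ℝ}
    (hf : Measurable f) (hfi : Integrable (fun ω => f (V ω, W ω)) μ) :
    μ[fun ω => f (V ω, W ω) | MeasurableSpace.comap V inferInstance]
      =ᵐ[μ] fun ω => ∫ w, f (V ω, w) ∂(μ.map W) := by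
  have hlaw : μ.map (fun ω => (V ω, W ω)) = (μ.map V).prod (μ.map W) :=
    (indepFun_iff_map_prod_eq_prod_map_map hV.aemeasurable hW.aemeasurable).mp hVW
  have hf_prod : Integrable f ((μ.map V).prod (μ.map W)) := by
    rwa [← hlaw, integrable_map_measure hf.aestronglyMeasurable (hV.prodMk hW).aemeasurable]
  have hφ : StronglyMeasurable fun v => ∫ w, f (v, w) ∂(μ.map W) :=
    hf.stronglyMeasurable.integral_prod_right'
  have hφV : Integrable (fun ω => ∫ w, f (V ω, w) ∂(μ.map W)) μ :=
    (integrable_map_measure hφ.aestronglyMeasurable hV.aemeasurable).mp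
      hf_prod.integral_prod_left
  refine (ae_eq_condExp_of_forall_setIntegral_eq hV.comap_le hfi
    (fun _ _ _ => hφV.integrableOn) ?_
    (hφ.measurable.comp (comap_measurable V)).aestronglyMeasurable).symm
  rintro _ ⟨t, ht, rfl⟩ -
  have hpre : V ⁻¹' t = (fun ω => (V ω, W ω)) ⁻¹' (t ×ˢ Set.univ) := by ext; simp
  calc ∫ ω in V ⁻¹' t, ∫ w, f (V ω, w) ∂(μ.map W) ∂μ
      = ∫ v in t, ∫ w, f (v, w) ∂(μ.map W) ∂(μ.map V) :=
        (setIntegral_map ht hφ.aestronglyMeasurable hV.aemeasurable).symm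
    _ = ∫ p in t ×ˢ Set.univ, f p ∂((μ.map V).prod (μ.map W)) := by
        rw [setIntegral_prod _ hf_prod.integrableOn, Measure.restrict_univ]
    _ = ∫ ω in V ⁻¹' t, f (V ω, W ω) ∂μ := by
        rw [← hlaw, hpre, setIntegral_map (ht.prod MeasurableSet.univ)
          hf.aestronglyMeasurable (hV.prodMk hW).aemeasurable]

theorem IndepFun.condExp_comap_ae_eq_condExp_comap_comp [IsFiniteMeasure μ] {V : Ω → β}
    {W : Ω → γ} (hV : Measurable V) (hW : Measurable W) (hVW : IndepFun V W μ) {p : β → α}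
    (hp : Measurable p) {f : Ω → ℝ}
    (hf : Measurable[MeasurableSpace.comap (fun ω => (p (V ω), W ω)) inferInstance] f)
    (hfi : Integrable f μ) :
    μ[f | MeasurableSpace.comap V inferInstance]
      =ᵐ[μ] μ[f | MeasurableSpace.comap (fun ω => p (V ω)) inferInstance] := by
  obtain ⟨g, hg, rfl⟩ := hf.exists_eq_measurable_comp
  exact (hVW.condExp_comap_ae_eq_integral_map hV hW
    (hg.comp (hp.prodMap measurable_id)) hfi).trans
    ((hVW.comp hp measurable_id).condExp_comap_ae_eq_integral_map (hp.comp hV) hW hg hfi).symm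

end ProbabilityTheory

namespace MeasureTheory

variable {Ω : Type*} {mΩ : MeasurableSpace Ω} {μ : Measure Ω} [IsFiniteMeasure μ]
  {m₁ m₂ : MeasurableSpace Ω}

theorem condExp_mul_add_sub_condExp_ae_eq (h₁₂ : m₁ ≤ m₂) (h₂ : m₂ ≤ mΩ) {S Y H : Ω → ℝ}
    (hY : StronglyMeasurable[m₂] Y) (hYi : Integrable Y μ) (hSi : Integrable S μ)
    (hSYi : Integrable (S * Y) μ) (hHi : Integrable H μ)
    (hS : μ[S | m₂] =ᵐ[μ] μ[S | m₁]) (hH : μ[H | m₂] =ᵐ[μ] μ[H | m₁]) :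
    μ[S * Y + H | m₂] - μ[S * Y + H | m₁] =ᵐ[μ] μ[S | m₁] * (Y - μ[Y | m₁]) := by
  have hpull₂ : μ[S * Y | m₂] =ᵐ[μ] μ[S | m₁] * Y :=
    (condExp_mul_of_stronglyMeasurable_right hY hSYi hSi).trans (hS.mul .rfl)
  have hpull₁ : μ[S * Y | m₁] =ᵐ[μ] μ[S | m₁] * μ[Y | m₁] := calc
    μ[S * Y | m₁] =ᵐ[μ] μ[μ[S * Y | m₂] | m₁] := (condExp_condExp_of_le h₁₂ h₂).symm
    _ =ᵐ[μ] μ[μ[S | m₁] * Y | m₁] := condExp_congr_ae hpull₂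
    _ =ᵐ[μ] μ[S | m₁] * μ[Y | m₁] := condExp_mul_of_stronglyMeasurable_left
        stronglyMeasurable_condExp (integrable_condExp.congr hpull₂) hYi
  filter_upwards [condExp_add hSYi hHi m₂, condExp_add hSYi hHi m₁, hpull₂, hpull₁, hH]
    with ω hadd₂ hadd₁ hp₂ hp₁ hHω
  simp only [Pi.sub_apply, Pi.add_apply, Pi.mul_apply] at hadd₂ hadd₁ hp₂ hp₁ ⊢
  rw [hadd₂, hadd₁, hp₂, hp₁, hHω]
  ring

end MeasureTheory

theorem Measurable.prodMk_pi_of_compl {Ω α β γ : Type*} {mΩ : MeasurableSpace Ω}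
    [MeasurableSpace α] [MeasurableSpace β] [MeasurableSpace γ] {ι : Type*} [Fintype ι]
    [DecidableEq ι] {X : ι → Ω → α} {Y : ι → Ω → β} {ξ : Ω → γ} {i0 : ι}
    (h : Measurable fun ω => (X i0 ω, ξ ω, fun j : ({i0}ᶜ : Finset ι) => (X j ω, Y j ω))) :
    Measurable fun ω => (ξ ω, fun j => X j ω) := by
  refine (measurable_fst.comp (measurable_snd.comp h)).prodMk
    (measurable_pi_lambda _ fun j => ?_)
  by_cases hj : j = i0
  · subst hj
    exact measurable_fst.comp h
  · have hj' : j ∈ ({i0}ᶜ : Finset ι) := by simpa using hj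
    exact measurable_fst.comp ((measurable_pi_apply (⟨j, hj'⟩ : ({i0}ᶜ : Finset ι))).comp
      (measurable_snd.comp (measurable_snd.comp h)))

theorem honesty_decomposition_general
    {Ω : Type*} [MeasurableSpace Ω]
    {E : Type*} [MeasurableSpace E] {Ξ : Type*} [MeasurableSpace Ξ]
    (μ : Measure Ω) [IsProbabilityMeasure μ]
    (s : ℕ)
    (X : Fin s → Ω → E) (Y : Fin s → Ω → ℝ)
    (Z : Fin s → Ω → E × ℝ) (hZ : Z = fun i ω => (X i ω, Y i ω))
    (hZmeas : ∀ i, Measurable (Z i))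
    (hindep : iIndepFun Z μ)
    (i0 : Fin s)
    (hYint : ∀ i, Integrable (Y i) μ)
    (ξ : Ω → Ξ) (hξmeas : Measurable ξ)
    (hξindep : IndepFun ξ (fun ω => fun i => Z i ω) μ)
    (σf : Fin s → Ξ × (Fin s → E) → ℝ) (hσfmeas : ∀ i, Measurable (σf i))
    (St : Fin s → Ω → ℝ) (hSt : St = fun i ω => σf i (ξ ω, fun j => X j ω))
    (hSbd : ∀ i, ∀ᵐ ω ∂μ, |St i ω| ≤ 1)
    (T : Ω → ℝ) (hT : T = fun ω => ∑ i, St i ω * Y i ω) :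
    (fun ω => (μ[T | MeasurableSpace.comap (Z i0) inferInstance]) ω
        - (μ[T | MeasurableSpace.comap (X i0) inferInstance]) ω)
      =ᵐ[μ] fun ω => (μ[St i0 | MeasurableSpace.comap (X i0) inferInstance]) ω *
        (Y i0 ω - (μ[Y i0 | MeasurableSpace.comap (X i0) inferInstance]) ω) := by
  subst hZ
  have hZW := hindep.indepFun_prodMk_compl hZmeas hξmeas hξindep i0
  set W := fun ω => (ξ ω, fun j : ({i0}ᶜ : Finset (Fin s)) => (X j ω, Y j ω))
  have hW : Measurable W := hξmeas.prodMk (measurable_pi_lambda _ fun j => hZmeas j)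
  set R := fun ω => (X i0 ω, W ω)
  have hR := comap_measurable (m := inferInstance) R
  have hS : ∀ i, Measurable[MeasurableSpace.comap R inferInstance] (St i) :=
    fun i => hSt ▸ (hσfmeas i).comp hR.prodMk_pi_of_compl
  have hY : ∀ j ∈ ({i0}ᶜ : Finset (Fin s)),
      Measurable[MeasurableSpace.comap R inferInstance] (Y j) :=
    fun j hj => measurable_snd.comp
      ((measurable_pi_apply (⟨j, hj⟩ : ({i0}ᶜ : Finset (Fin s)))).comp
        (measurable_snd.comp (measurable_snd.comp hR)))
  have hS_int : ∀ i, Integrable (St i) μ := fun i =>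
    .of_bound ((hS i).mono ((hZmeas i0).fst.prodMk hW).comap_le le_rfl).aestronglyMeasurable 1
      (by simpa [Real.norm_eq_abs] using hSbd i)
  have hSY_int : ∀ i, Integrable (St i * Y i) μ := fun i =>
    (hYint i).bdd_mul (hS_int i).aestronglyMeasurable (by simpa [Real.norm_eq_abs] using hSbd i)
  have hcondExp_eq : ∀ f,
      Measurable[MeasurableSpace.comap R inferInstance] f →
      Integrable f μ → μ[f | MeasurableSpace.comap (fun ω => (X i0 ω, Y i0 ω)) inferInstance]
        =ᵐ[μ] μ[f | MeasurableSpace.comap (X i0) inferInstance] := fun f hf hfi =>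
    hZW.condExp_comap_ae_eq_condExp_comap_comp (hZmeas i0) hW measurable_fst hf hfi
  have hT_split : T = St i0 * Y i0 + fun ω => ∑ i ∈ {i0}ᶜ, St i ω * Y i ω := by
    funext ω
    simp [hT, Fintype.sum_eq_add_sum_compl i0]
  rw [hT_split]
  exact condExp_mul_add_sub_condExp_ae_eq
    (measurable_fst.comp (comap_measurable _)).comap_le (hZmeas i0).comap_le
    (measurable_snd.comp (comap_measurable _)).stronglyMeasurable (hYint i0) (hS_int i0)
    (hSY_int i0) (integrable_finsetSum _ fun i _ => hSY_int i)
    (hcondExp_eq _ (hS i0) (hS_int i0))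
    (hcondExp_eq _ (Finset.measurable_fun_sum _ fun i hi => (hS i).mul (hY i hi))
      (integrable_finsetSum _ fun i _ => hSY_int i))

/-- (Honesty decomposition.) If `T = Σ_i S_i Y_i` where the weights
`S_i` are measurable functions of independent auxiliary randomness `ξ` and the features
`X_1, ..., X_s` only, with `|S_i| ≤ 1` a.s., then almost surely
`E[T | X_1, Y_1] − E[T | X_1] = E[S_1 | X_1]·(Y_1 − E[Y_1 | X_1])`. -/
theorem honesty_decomposition
    {Ω : Type*} [MeasurableSpace Ω]
    {E : Type*} [MeasurableSpace E] {Ξ : Type*} [MeasurableSpace Ξ]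
    (μ : Measure Ω) [IsProbabilityMeasure μ]
    (s : ℕ) (hs : 1 ≤ s)
    (X : Fin s → Ω → E) (Y : Fin s → Ω → ℝ)
    (Z : Fin s → Ω → E × ℝ) (hZ : Z = fun i ω => (X i ω, Y i ω))
    (hZmeas : ∀ i, Measurable (Z i))
    (hindep : iIndepFun Z μ)
    (i0 : Fin s) (hi0 : (i0 : ℕ) = 0)
    (hident : ∀ i, IdentDistrib (Z i) (Z i0) μ μ)
    (hYint : ∀ i, Integrable (Y i) μ)
    (ξ : Ω → Ξ) (hξmeas : Measurable ξ)
    (hξindep : IndepFun ξ (fun ω => fun i => Z i ω) μ)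
    (σf : Fin s → Ξ × (Fin s → E) → ℝ) (hσfmeas : ∀ i, Measurable (σf i))
    (St : Fin s → Ω → ℝ) (hSt : St = fun i ω => σf i (ξ ω, fun j => X j ω))
    (hSbd : ∀ i, ∀ᵐ ω ∂μ, |St i ω| ≤ 1)
    (T : Ω → ℝ) (hT : T = fun ω => ∑ i, St i ω * Y i ω) :
    (fun ω => (μ[T | MeasurableSpace.comap (Z i0) inferInstance]) ω
        - (μ[T | MeasurableSpace.comap (X i0) inferInstance]) ω)
      =ᵐ[μ] fun ω => (μ[St i0 | MeasurableSpace.comap (X i0) inferInstance]) ω *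
        (Y i0 ω - (μ[Y i0 | MeasurableSpace.comap (X i0) inferInstance]) ω) :=
  honesty_decomposition_general μ s X Y Z hZ hZmeas hindep i0 hYint ξ hξmeas hξindep σf hσfmeas St
    hSt hSbd T hT
end
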